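/- arXiv:2602.01242 — 9 statements merged into one kernel-verified Lean document; each statement's English description precedes it below -/
import Mathlib

section
/- Let (a_n) and (b_n) be real sequences with a_n ≥ 2 and b_n > 1 for all n. Then lim_{n→∞} (log a_n)/(log b_n) = 0 if and only if there exists a sequence (q_n) of natural numbers with lim_{n→∞} q_n = ∞ and lim_{n→∞} a_n^{q_n}/b_n = 0. -/
open Filter

theorem stmt_0 (a b : ℕ → ℝ) (ha : ∀ n, 2 ≤ a n) (hb : ∀ n, 1 < b n) :
    Tendsto (fun n => Real.log (a n) / Real.log (b n)) atTop (nhds 0) ↔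
      ∃ q : ℕ → ℕ, Tendsto q atTop atTop ∧
        Tendsto (fun n => a n ^ q n / b n) atTop (nhds 0) := by
  have hapos : ∀ n, (0:ℝ) < a n := fun n => lt_of_lt_of_le two_pos (ha n)
  have hLpos : ∀ n, 0 < Real.log (a n) := fun n =>
    Real.log_pos (lt_of_lt_of_le one_lt_two (ha n))
  have hMpos : ∀ n, 0 < Real.log (b n) := fun n => Real.log_pos (hb n)
  constructor
  · intro h
    -- r n = log b n / log a n tends to atTop
    have hr : Tendsto (fun n => Real.log (b n) / Real.log (a n)) atTop atTop := by
      have h' : Tendsto (fun n => Real.log (a n) / Real.log (b n)) atTop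
          (nhdsWithin 0 (Set.Ioi 0)) := by
        rw [tendsto_nhdsWithin_iff]
        exact ⟨h, Eventually.of_forall fun n => div_pos (hLpos n) (hMpos n)⟩
      have := h'.inv_tendsto_nhdsGT_zero
      simpa [Pi.inv_def, inv_div] using this
    refine ⟨fun n => ⌊Real.sqrt (Real.log (b n) / Real.log (a n))⌋₊, ?_, ?_⟩
    · have hsqrt : Tendsto Real.sqrt atTop atTop := by
        apply tendsto_atTop_atTop.mpr
        intro C
        refine ⟨max 0 C ^ 2, fun x hx => le_trans (le_max_right 0 C) ?_⟩
        rw [← Real.sqrt_sq (le_max_left 0 C)]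
        exact Real.sqrt_le_sqrt hx
      exact tendsto_nat_floor_atTop.comp (hsqrt.comp hr)
    · -- log b n tends to atTop
      have hM : Tendsto (fun n => Real.log (b n)) atTop atTop := by
        have h2 : Tendsto (fun n => Real.log 2 *
            (Real.log (b n) / Real.log (a n))) atTop atTop :=
          hr.const_mul_atTop (Real.log_pos one_lt_two)
        refine tendsto_atTop_mono (fun n => ?_) h2
        have h3 : Real.log 2 * (Real.log (b n) / Real.log (a n)) ≤
            Real.log (a n) * (Real.log (b n) / Real.log (a n)) := by
          apply mul_le_mul_of_nonneg_right
          · exact Real.log_le_log two_pos (ha n)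
          · exact (div_pos (hMpos n) (hLpos n)).le
        calc Real.log 2 * (Real.log (b n) / Real.log (a n)) ≤
              Real.log (a n) * (Real.log (b n) / Real.log (a n)) := h3
          _ = Real.log (b n) := by
              rw [mul_comm, div_mul_cancel₀ _ (hLpos n).ne']
      -- bound: eventually a^q/b ≤ exp (-(log b n / 2))
      have hbd : Tendsto (fun n => Real.exp (-(Real.log (b n) / 2))) atTop (nhds 0) := by
        apply Real.tendsto_exp_atBot.comp
        exact tendsto_neg_atTop_atBot.comp (hM.atTop_div_const two_pos)
      apply squeeze_zero' (g := fun n => Real.exp (-(Real.log (b n) / 2)))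
        (Eventually.of_forall fun n => div_nonneg (pow_nonneg (hapos n).le _)
          (lt_trans one_pos (hb n)).le) ?_ hbd
      filter_upwards [hr.eventually_ge_atTop 4] with n hn4
      set L := Real.log (a n)
      set M := Real.log (b n)
      set Q : ℕ := ⌊Real.sqrt (M / L)⌋₊
      have hrpos : (0:ℝ) < M / L := div_pos (hMpos n) (hLpos n)
      have hsq : Real.sqrt (M / L) ≤ (M / L) / 2 := by
        have h2 : (2:ℝ) ≤ Real.sqrt (M / L) := by
          have : Real.sqrt 4 ≤ Real.sqrt (M / L) := Real.sqrt_le_sqrt hn4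
          nlinarith [Real.sq_sqrt (by norm_num : (0:ℝ) ≤ 4), Real.sqrt_nonneg (4:ℝ),
            this]
        nlinarith [Real.sq_sqrt hrpos.le, Real.sqrt_nonneg (M / L)]
      have hQ : (Q:ℝ) ≤ (M / L) / 2 := le_trans (Nat.floor_le (Real.sqrt_nonneg _)) hsq
      have hQL : (Q:ℝ) * L ≤ M / 2 := by
        have := mul_le_mul_of_nonneg_right hQ (hLpos n).le
        calc (Q:ℝ) * L ≤ (M / L) / 2 * L := this
          _ = M / 2 := by
              rw [div_mul_eq_mul_div, div_mul_eq_mul_div, div_div,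
                mul_comm M L, mul_div_mul_left _ _ (hLpos n).ne']
      have hval : a n ^ Q / b n = Real.exp ((Q:ℝ) * L - M) := by
        rw [Real.exp_sub]
        congr 1
        · rw [← Real.log_pow] at *
          exact (Real.exp_log (pow_pos (hapos n) Q)).symm
        · exact (Real.exp_log (lt_trans one_pos (hb n))).symm
      rw [hval]
      apply Real.exp_le_exp.mpr
      linarith
  · rintro ⟨q, hq, hab⟩
    have hqR : Tendsto (fun n => (q n : ℝ)) atTop atTop :=
      tendsto_natCast_atTop_atTop.comp hq
    have h1 : Tendsto (fun n => 1 / (q n : ℝ)) atTop (nhds 0) := by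
      simpa [one_div, Pi.inv_def] using hqR.inv_tendsto_atTop
    apply squeeze_zero' (g := fun n => 1 / (q n : ℝ))
      (Eventually.of_forall fun n => (div_pos (hLpos n) (hMpos n)).le) ?_ h1
    filter_upwards [hab.eventually_lt_const one_pos, hq.eventually_ge_atTop 1]
      with n hlt hq1
    have hqpos : (0:ℝ) < (q n : ℝ) := by exact_mod_cast Nat.lt_of_lt_of_le Nat.zero_lt_one hq1
    have hblt : a n ^ q n < b n := by
      have := (div_lt_one (lt_trans one_pos (hb n))).mp hlt
      exact this
    have hlog : (q n : ℝ) * Real.log (a n) < Real.log (b n) := by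
      have := Real.log_lt_log (pow_pos (hapos n) (q n)) hblt
      rwa [Real.log_pow] at this
    rw [div_le_div_iff₀ (hMpos n) hqpos]
    nlinarith [hLpos n, hMpos n]
end

section
/- Let Z_1, ..., Z_p ∈ ℝ^N, S = (1/p) Σ_{j=1}^p Z_j Z_jᵀ, and let z ∈ ℂ be such that zI - S and zI - S + (1/p) Z_j Z_jᵀ are invertible for every j. Setting R_j = (zI - S + (1/p) Z_j Z_jᵀ)⁻¹, one has 1 - (1/p) Z_jᵀ R_j Z_j ≠ 0 for every j, and -1 + z·(1/N)·tr((zI - S)⁻¹) = -p/N + (1/N) Σ_{j=1}^p 1/(1 - (1/p) Z_jᵀ R_j Z_j). -/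
open Matrix

private lemma vmv_mulVec {N : ℕ} (u w x : Fin N → ℂ) :
    vecMulVec u w *ᵥ x = (w ⬝ᵥ x) • u := by
  ext i
  simp [vecMulVec, mulVec, dotProduct, Finset.sum_mul, Finset.mul_sum, mul_comm, mul_left_comm]

private lemma trace_vmv_mul {N : ℕ} (u w : Fin N → ℂ) (M : Matrix (Fin N) (Fin N) ℂ) :
    Matrix.trace (vecMulVec u w * M) = w ⬝ᵥ M *ᵥ u := by
  simp only [Matrix.trace, diag_apply, mul_apply, vecMulVec_apply, dotProduct, mulVec,
    dotProduct, Finset.mul_sum]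
  rw [Finset.sum_comm]
  apply Finset.sum_congr rfl
  intro i _
  apply Finset.sum_congr rfl
  intro j _
  ring

theorem stmt_3 {N p : ℕ} (hN : 0 < N) (hp : 0 < p) (Z : Fin p → Fin N → ℝ) (z : ℂ)
    (S : Matrix (Fin N) (Fin N) ℂ)
    (hS : S = (p : ℂ)⁻¹ •
      ∑ j, vecMulVec (fun i => (Z j i : ℂ)) (fun i => (Z j i : ℂ)))
    (R : Fin p → Matrix (Fin N) (Fin N) ℂ)
    (hR : ∀ j, R j = (z • (1 : Matrix (Fin N) (Fin N) ℂ) - S +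
      (p : ℂ)⁻¹ • vecMulVec (fun i => (Z j i : ℂ)) (fun i => (Z j i : ℂ)))⁻¹)
    (hinv : IsUnit (z • (1 : Matrix (Fin N) (Fin N) ℂ) - S).det)
    (hinvj : ∀ j, IsUnit (z • (1 : Matrix (Fin N) (Fin N) ℂ) - S +
      (p : ℂ)⁻¹ • vecMulVec (fun i => (Z j i : ℂ)) (fun i => (Z j i : ℂ))).det) :
    (∀ j, 1 - (p : ℂ)⁻¹ *
        ((fun i => (Z j i : ℂ)) ⬝ᵥ (R j) *ᵥ (fun i => (Z j i : ℂ))) ≠ 0) ∧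
      -1 + z * (N : ℂ)⁻¹ * Matrix.trace ((z • (1 : Matrix (Fin N) (Fin N) ℂ) - S)⁻¹) =
        -((p : ℂ) / (N : ℂ)) + (N : ℂ)⁻¹ *
          ∑ j, (1 - (p : ℂ)⁻¹ *
            ((fun i => (Z j i : ℂ)) ⬝ᵥ (R j) *ᵥ (fun i => (Z j i : ℂ))))⁻¹ := by
  have hpne : (p : ℂ) ≠ 0 := Nat.cast_ne_zero.mpr hp.ne'
  have hNne : (N : ℂ) ≠ 0 := Nat.cast_ne_zero.mpr hN.ne'
  set v : Fin p → Fin N → ℂ := fun j i => (Z j i : ℂ) with hv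
  set A : Matrix (Fin N) (Fin N) ℂ := z • (1 : Matrix (Fin N) (Fin N) ℂ) - S with hAdef
  set W : Fin p → Matrix (Fin N) (Fin N) ℂ := fun j => vecMulVec (v j) (v j) with hW
  set B : Fin p → Matrix (Fin N) (Fin N) ℂ := fun j => A + (p : ℂ)⁻¹ • W j with hB
  set c : Fin p → ℂ := fun j => (p : ℂ)⁻¹ * (v j ⬝ᵥ (R j) *ᵥ v j) with hcdef
  have hA1 : A * A⁻¹ = 1 := Matrix.mul_nonsing_inv _ hinv
  have hA1' : A⁻¹ * A = 1 := Matrix.nonsing_inv_mul _ hinv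
  have hBR : ∀ j, B j * R j = 1 := fun j => by
    rw [hR j]; exact Matrix.mul_nonsing_inv _ (hinvj j)
  -- key: A *ᵥ (R j *ᵥ v j) = (1 - c j) • v j
  have key : ∀ j, A *ᵥ ((R j) *ᵥ v j) = (1 - c j) • v j := by
    intro j
    have hA' : A = B j - (p : ℂ)⁻¹ • W j := by rw [hB]; ring_nf; simp
    rw [hA', Matrix.sub_mulVec, Matrix.mulVec_mulVec, hBR j, Matrix.one_mulVec,
      Matrix.smul_mulVec, hW]
    simp only [vmv_mulVec]
    rw [hcdef]
    ext i
    simp only [Pi.sub_apply, Pi.smul_apply, smul_eq_mul, sub_smul, one_smul]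
    ring
  have hnz : ∀ j, 1 - c j ≠ 0 := by
    intro j h
    have h0 : A *ᵥ ((R j) *ᵥ v j) = 0 := by rw [key j, h, zero_smul]
    have h1 : (R j) *ᵥ v j = 0 := by
      have h1' : A⁻¹ *ᵥ (A *ᵥ ((R j) *ᵥ v j)) = 0 := by rw [h0, Matrix.mulVec_zero]
      rwa [Matrix.mulVec_mulVec, hA1', Matrix.one_mulVec] at h1'
    have h2 : v j = 0 := by
      have hv' : (B j * R j) *ᵥ v j = v j := by rw [hBR j, Matrix.one_mulVec]
      rw [← Matrix.mulVec_mulVec] at hv'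
      rw [h1, Matrix.mulVec_zero] at hv'
      exact hv'.symm
    have : c j = 0 := by rw [hcdef]; simp [h2]
    rw [this, sub_zero] at h
    exact one_ne_zero h
  -- quadratic form via A⁻¹
  have quad : ∀ j, (p : ℂ)⁻¹ * (v j ⬝ᵥ A⁻¹ *ᵥ v j) = (1 - c j)⁻¹ - 1 := by
    intro j
    have h3 : A⁻¹ *ᵥ (A *ᵥ ((R j) *ᵥ v j)) = (R j) *ᵥ v j := by
      rw [Matrix.mulVec_mulVec, hA1', Matrix.one_mulVec]
    rw [key j] at h3
    have h4 : (1 - c j) • (A⁻¹ *ᵥ v j) = (R j) *ᵥ v j := by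
      rw [← h3, Matrix.mulVec_smul]
    have h5 : (1 - c j) * (v j ⬝ᵥ A⁻¹ *ᵥ v j) = v j ⬝ᵥ (R j) *ᵥ v j := by
      rw [← h4, dotProduct_smul, smul_eq_mul]
    have hc' : c j = (p : ℂ)⁻¹ * (v j ⬝ᵥ (R j) *ᵥ v j) := rfl
    have h7 : (1 - c j) * ((1 - c j)⁻¹ - 1) = c j := by
      rw [mul_sub, mul_inv_cancel₀ (hnz j), mul_one]; ring
    apply mul_left_cancel₀ (hnz j)
    rw [h7, hc']
    linear_combination (p : ℂ)⁻¹ * h5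
  -- trace identity
  have htr : z * Matrix.trace A⁻¹ = (N : ℂ) - p + ∑ j, (1 - c j)⁻¹ := by
    have e1 : (z • (1 : Matrix (Fin N) (Fin N) ℂ)) * A⁻¹ = (A + S) * A⁻¹ := by
      rw [hAdef, sub_add_cancel]
    have e2 : Matrix.trace ((z • (1 : Matrix (Fin N) (Fin N) ℂ)) * A⁻¹)
        = z * Matrix.trace A⁻¹ := by
      rw [Matrix.smul_mul, Matrix.one_mul, Matrix.trace_smul, smul_eq_mul]
    have e3 : Matrix.trace (S * A⁻¹) = ∑ j, (p : ℂ)⁻¹ * (v j ⬝ᵥ A⁻¹ *ᵥ v j) := by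
      rw [hS]
      rw [Matrix.smul_mul, Finset.sum_mul, Matrix.trace_smul]
      rw [Matrix.trace_sum]
      rw [smul_eq_mul, Finset.mul_sum]
      apply Finset.sum_congr rfl
      intro j _
      rw [trace_vmv_mul]
    have e4 : Matrix.trace ((A + S) * A⁻¹) = (N : ℂ) + Matrix.trace (S * A⁻¹) := by
      rw [Matrix.add_mul, Matrix.trace_add, hA1, Matrix.trace_one]
      simp
    rw [← e2, e1, e4, e3]
    have : ∑ j, (p : ℂ)⁻¹ * (v j ⬝ᵥ A⁻¹ *ᵥ v j) = ∑ j, ((1 - c j)⁻¹ - 1) := by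
      exact Finset.sum_congr rfl fun j _ => quad j
    rw [this, Finset.sum_sub_distrib]
    simp [Finset.card_univ]
    ring
  constructor
  · intro j
    exact hnz j
  · have hNN : (N : ℂ)⁻¹ * N = 1 := inv_mul_cancel₀ hNne
    have hsum : (∑ j, (1 - (p : ℂ)⁻¹ *
        ((fun i => (Z j i : ℂ)) ⬝ᵥ (R j) *ᵥ (fun i => (Z j i : ℂ))))⁻¹)
        = ∑ j, (1 - c j)⁻¹ := rfl
    rw [hsum]
    linear_combination (N : ℂ)⁻¹ * htr + hNN
end

section
/- Let A ∈ ℝ^{N×N} be symmetric, z ∈ ℂ with Im(z) > 0, and Z ∈ ℝ^N. Then |(Zᵀ (zI - A)⁻² Z) / (1 + Zᵀ (zI - A)⁻¹ Z)| ≤ 1/Im(z). -/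
open Matrix

lemma aux_star_self {N : ℕ} (w : Fin N → ℂ) :
    star w ⬝ᵥ w = ((∑ i, Complex.normSq (w i) : ℝ) : ℂ) := by
  push_cast
  simp only [dotProduct, Pi.star_apply]
  refine Finset.sum_congr rfl fun i _ => ?_
  rw [RCLike.star_def, mul_comm, Complex.mul_conj]

lemma aux_quad_im {N : ℕ} (B : Matrix (Fin N) (Fin N) ℂ) (hBH : Bᴴ = B)
    (w : Fin N → ℂ) : (star w ⬝ᵥ B *ᵥ w).im = 0 := by
  have h : star (star w ⬝ᵥ B *ᵥ w) = star w ⬝ᵥ B *ᵥ w := by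
    rw [← star_dotProduct, star_mulVec, hBH, ← dotProduct_mulVec]
  have h2 : (star (star w ⬝ᵥ B *ᵥ w)).im = -(star w ⬝ᵥ B *ᵥ w).im := by
    simp [Complex.conj_im]
  have := congrArg Complex.im h
  linarith

theorem stmt_5 {N : ℕ} (A : Matrix (Fin N) (Fin N) ℝ) (hA : A.IsSymm)
    (z : ℂ) (hz : 0 < z.im) (Z : Fin N → ℝ) :
    norm
        (((fun i => (Z i : ℂ)) ⬝ᵥ
            ((z • (1 : Matrix (Fin N) (Fin N) ℂ) - A.map (fun t => (t : ℂ)))⁻¹ *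
              (z • (1 : Matrix (Fin N) (Fin N) ℂ) - A.map (fun t => (t : ℂ)))⁻¹) *ᵥ
            (fun i => (Z i : ℂ))) /
          (1 + (fun i => (Z i : ℂ)) ⬝ᵥ
            (z • (1 : Matrix (Fin N) (Fin N) ℂ) - A.map (fun t => (t : ℂ)))⁻¹ *ᵥ
            (fun i => (Z i : ℂ)))) ≤ 1 / z.im := by
  set Zc : Fin N → ℂ := fun i => (Z i : ℂ) with hZcdef
  set B : Matrix (Fin N) (Fin N) ℂ := A.map (fun t => (t : ℂ)) with hBdef
  set M : Matrix (Fin N) (Fin N) ℂ := z • 1 - B with hMdef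
  have hBT : Bᵀ = B := (hA.map _).eq
  have hBH : Bᴴ = B := by
    ext i j
    simp [hBdef, Matrix.conjTranspose_apply, Matrix.map_apply, hA.apply]
  have hMT : Mᵀ = M := by
    rw [hMdef, transpose_sub, transpose_smul, transpose_one, hBT]
  have hMH : Mᴴ = (starRingEnd ℂ z) • 1 - B := by
    rw [hMdef, conjTranspose_sub, conjTranspose_smul, conjTranspose_one, hBH]
    rfl
  -- expand quadratic form of M
  have hMquad : ∀ v : Fin N → ℂ, star v ⬝ᵥ M *ᵥ v
      = z * ((∑ i, Complex.normSq (v i) : ℝ) : ℂ) - star v ⬝ᵥ B *ᵥ v := by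
    intro v
    rw [hMdef, sub_mulVec, dotProduct_sub, smul_mulVec, one_mulVec,
      dotProduct_smul, smul_eq_mul, aux_star_self]
  -- invertibility
  have hdet : M.det ≠ 0 := by
    intro hd
    obtain ⟨v, hv0, hv⟩ := Matrix.exists_mulVec_eq_zero_iff.mpr hd
    have h1 : star v ⬝ᵥ M *ᵥ v = 0 := by rw [hv, dotProduct_zero]
    rw [hMquad v] at h1
    have him := congrArg Complex.im h1
    simp [Complex.sub_im, Complex.mul_im, aux_quad_im B hBH v] at him
    have hs : 0 < ∑ i, Complex.normSq (v i) := by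
      obtain ⟨i, hi⟩ := Function.ne_iff.mp hv0
      refine Finset.sum_pos' (fun j _ => Complex.normSq_nonneg _) ⟨i, Finset.mem_univ i, ?_⟩
      exact Complex.normSq_pos.mpr hi
    rcases him with h | h
    · exact hz.ne' h
    · exact hs.ne' h
  have hdetU : IsUnit M.det := isUnit_iff_ne_zero.mpr hdet
  set w : Fin N → ℂ := M⁻¹ *ᵥ Zc with hwdef
  set s : ℝ := ∑ i, Complex.normSq (w i) with hsdef
  have hZw : M *ᵥ w = Zc := by
    rw [hwdef, mulVec_mulVec, Matrix.mul_nonsing_inv M hdetU, one_mulVec]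
  have hRT : (M⁻¹)ᵀ = M⁻¹ := by rw [transpose_nonsing_inv, hMT]
  have hstarZ : star Zc = Zc := by
    ext i; simp [hZcdef, Complex.conj_ofReal]
  -- numerator
  have hnum : Zc ⬝ᵥ (M⁻¹ * M⁻¹) *ᵥ Zc = w ⬝ᵥ w := by
    rw [← mulVec_mulVec, dotProduct_mulVec, ← mulVec_transpose, hRT, ← hwdef]
  have hnum_le : norm (w ⬝ᵥ w) ≤ s := by
    calc norm (w ⬝ᵥ w) ≤ ∑ i, norm (w i * w i) :=
          norm_sum_le _ _
      _ = s := by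
          rw [hsdef]
          refine Finset.sum_congr rfl fun i _ => ?_
          rw [norm_mul, ← Complex.sq_norm, sq]
  -- imaginary part of denominator
  have hx_im : (Zc ⬝ᵥ M⁻¹ *ᵥ Zc).im = -z.im * s := by
    have h1 : Zc ⬝ᵥ M⁻¹ *ᵥ Zc = star w ⬝ᵥ Mᴴ *ᵥ w := by
      rw [← hwdef, ← hstarZ]
      conv_lhs => rw [← hZw]
      rw [star_mulVec, ← dotProduct_mulVec]
    rw [h1, hMH, sub_mulVec, dotProduct_sub, smul_mulVec, one_mulVec,
      dotProduct_smul, smul_eq_mul, aux_star_self, ← hsdef]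
    simp [Complex.sub_im, Complex.mul_im, aux_quad_im B hBH w]
  have hs_nonneg : 0 ≤ s :=
    Finset.sum_nonneg fun i _ => Complex.normSq_nonneg (w i)
  have hden_ge : z.im * s ≤ norm (1 + Zc ⬝ᵥ M⁻¹ *ᵥ Zc) := by
    have h1 : (1 + Zc ⬝ᵥ M⁻¹ *ᵥ Zc).im = -z.im * s := by
      simp [Complex.add_im, hx_im]
    have h2 := Complex.abs_im_le_norm (1 + Zc ⬝ᵥ M⁻¹ *ᵥ Zc)
    rw [h1, abs_of_nonpos (by nlinarith)] at h2
    linarith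
  rw [norm_div, hnum]
  by_cases hs0 : s = 0
  · have hw0 : w ⬝ᵥ w = 0 := by
      have hall : ∀ i ∈ Finset.univ, Complex.normSq (w i) = 0 := by
        intro i _
        exact le_antisymm (hs0 ▸ Finset.single_le_sum
          (fun j (_ : j ∈ Finset.univ) => Complex.normSq_nonneg (w j))
          (Finset.mem_univ i)) (Complex.normSq_nonneg _)
      have hw : ∀ i, w i = 0 := fun i =>
        Complex.normSq_eq_zero.mp (hall i (Finset.mem_univ i))
      simp [dotProduct, hw]
    rw [hw0]
    simp only [norm_zero, zero_div]
    positivity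
  · have hspos : 0 < s := lt_of_le_of_ne hs_nonneg (Ne.symm hs0)
    have hdpos : 0 < z.im * s := mul_pos hz hspos
    calc norm (w ⬝ᵥ w) / norm (1 + Zc ⬝ᵥ M⁻¹ *ᵥ Zc)
        ≤ s / (z.im * s) := div_le_div₀ hs_nonneg hnum_le hdpos hden_ge
      _ = 1 / z.im := by
        rw [mul_comm, div_mul_eq_div_div, div_self hs0]
end

section
/- Let n, d, l be positive integers with l ≤ d ≤ n/2. Then C(n-l, d-l)/C(n, d) ≤ e^{d²/(n-d)} · (2d/n)^l. In particular, if additionally d²/(n-d) ≤ log 2, then C(n-l, d-l)/C(n, d) ≤ (4d/n)^l. -/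
lemma aux_choose_ratio (n d : ℕ) (hdn : d ≤ n) :
    ∀ l, l ≤ d → (n - l).choose (d - l) * n ^ l ≤ n.choose d * d ^ l := by
  intro l
  induction l with
  | zero => simp
  | succ l ih =>
    intro h
    have hl : l ≤ d := Nat.le_of_succ_le h
    have ihl := ih hl
    have key : (n - l) * (n - (l + 1)).choose (d - (l + 1)) =
        ((n - l).choose (d - l)) * (d - l) := by
      have := Nat.add_one_mul_choose_eq (n - l - 1) (d - l - 1)
      have h1 : n - l - 1 + 1 = n - l := by omega
      have h2 : d - l - 1 + 1 = d - l := by omega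
      rw [h1, h2] at this
      have h3 : n - (l + 1) = n - l - 1 := by omega
      have h4 : d - (l + 1) = d - l - 1 := by omega
      rw [h3, h4, this]
    have h4 : (d - l) * n ≤ d * (n - l) := by
      zify [hl, (by omega : l ≤ n)]
      nlinarith [(by exact_mod_cast hdn : (d:ℤ) ≤ n), (by positivity : (0:ℤ) ≤ (l:ℤ))]
    have hnl : 0 < n - l := by omega
    have main : (n - (l + 1)).choose (d - (l + 1)) * n ^ (l + 1) * (n - l) ≤
        n.choose d * d ^ (l + 1) * (n - l) := by
      calc (n - (l + 1)).choose (d - (l + 1)) * n ^ (l + 1) * (n - l)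
          = ((n - l) * (n - (l + 1)).choose (d - (l + 1))) * (n ^ l * n) := by ring
        _ = ((n - l).choose (d - l) * (d - l)) * (n ^ l * n) := by rw [key]
        _ = ((d - l) * n) * ((n - l).choose (d - l) * n ^ l) := by ring
        _ ≤ (d * (n - l)) * (n.choose d * d ^ l) := Nat.mul_le_mul h4 ihl
        _ = n.choose d * d ^ (l + 1) * (n - l) := by ring
    exact Nat.le_of_mul_le_mul_right main hnl

theorem stmt_10 (n d l : ℕ) (hl : 0 < l) (hld : l ≤ d) (hdn : 2 * d ≤ n) :
    ((n - l).choose (d - l) : ℝ) / (n.choose d : ℝ) ≤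
        Real.exp ((d : ℝ) ^ 2 / ((n : ℝ) - d)) * (2 * d / n) ^ l ∧
      ((d : ℝ) ^ 2 / ((n : ℝ) - d) ≤ Real.log 2 →
        ((n - l).choose (d - l) : ℝ) / (n.choose d : ℝ) ≤ (4 * d / n) ^ l) := by
  have hdn' : d ≤ n := by omega
  have hn : 0 < n := by omega
  have hC : 0 < n.choose d := Nat.choose_pos hdn'
  have hCR : (0:ℝ) < n.choose d := by exact_mod_cast hC
  have hnR : (0:ℝ) < n := by exact_mod_cast hn
  have hnat := aux_choose_ratio n d hdn' l hld
  have h1 : ((n - l).choose (d - l) : ℝ) / (n.choose d : ℝ) ≤ ((d : ℝ) / n) ^ l := by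
    rw [div_pow, div_le_div_iff₀ hCR (by positivity)]
    calc ((n - l).choose (d - l) : ℝ) * (n : ℝ) ^ l ≤ (n.choose d : ℝ) * (d : ℝ) ^ l := by
          exact_mod_cast hnat
      _ = (d : ℝ) ^ l * (n.choose d : ℝ) := by ring
  have hfrac_nonneg : (0:ℝ) ≤ (d : ℝ) / n := by positivity
  have hdn2 : ((d : ℝ) / n) ≤ 2 * d / n := by
    rw [mul_div_assoc]; linarith
  constructor
  · have h2 : ((d : ℝ) / n) ^ l ≤ (2 * d / n) ^ l :=
      pow_le_pow_left₀ hfrac_nonneg hdn2 l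
    have h3 : (1:ℝ) ≤ Real.exp ((d : ℝ) ^ 2 / ((n : ℝ) - d)) := by
      apply Real.one_le_exp
      apply div_nonneg (by positivity)
      have : (d : ℝ) ≤ n := by exact_mod_cast hdn'
      linarith
    calc ((n - l).choose (d - l) : ℝ) / (n.choose d : ℝ) ≤ ((d : ℝ) / n) ^ l := h1
      _ ≤ (2 * d / n) ^ l := h2
      _ ≤ Real.exp ((d : ℝ) ^ 2 / ((n : ℝ) - d)) * (2 * d / n) ^ l := by
          nlinarith [pow_nonneg (le_trans hfrac_nonneg hdn2) l]
  · intro _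
    have hdn4 : ((d : ℝ) / n) ≤ 4 * d / n := by
      rw [mul_div_assoc]; linarith
    exact h1.trans (pow_le_pow_left₀ hfrac_nonneg hdn4 l)
end

section
/- Let n, d be positive integers with d ≤ n and d - 1 < n - d, and set N = C(n, d). Then (d · C(n-d, d-1)) / C(n, d) = (d²/n) · Π_{k=1}^{d-1} (1 - (d-1)/(n-d+k)), and this quantity is at most (d²/n) · e^{-(d-1)²/(n-1)}. -/
lemma prodIcc_fact (a m : ℕ) :
    (∏ k ∈ Finset.Icc 1 m, (a + k)) * a.factorial = (a + m).factorial := by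
  induction m with
  | zero => simp
  | succ m ih =>
    rw [Finset.prod_Icc_succ_top (Nat.succ_le_succ (Nat.zero_le m))]
    have : (a + (m + 1)).factorial = (a + (m+1)) * (a + m).factorial := by
      rw [← Nat.add_assoc, Nat.factorial_succ]
    rw [this, ← ih]; ring

lemma prodIcc_fact_real (a m : ℕ) :
    (∏ k ∈ Finset.Icc 1 m, ((a : ℝ) + k)) = ((a + m).factorial : ℝ) / (a.factorial : ℝ) := by
  have h := prodIcc_fact a m
  have h0 : (a.factorial : ℝ) ≠ 0 := Nat.cast_ne_zero.mpr a.factorial_ne_zero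
  field_simp
  push_cast [← h]
  rfl

theorem stmt_11 (n d : ℕ) (hd : 0 < d) (hdn : d ≤ n) (h : d - 1 < n - d) :
    ((d : ℝ) * ((n - d).choose (d - 1) : ℝ)) / (n.choose d : ℝ) =
        ((d : ℝ) ^ 2 / n) *
          ∏ k ∈ Finset.Icc 1 (d - 1), (1 - ((d : ℝ) - 1) / ((n : ℝ) - d + k)) ∧
      ((d : ℝ) * ((n - d).choose (d - 1) : ℝ)) / (n.choose d : ℝ) ≤
        ((d : ℝ) ^ 2 / n) * Real.exp (-((d : ℝ) - 1) ^ 2 / ((n : ℝ) - 1)) := by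
  set a := n - d with ha
  set m := d - 1 with hm
  have hma : m < a := h
  have hdm : d = m + 1 := by omega
  have hn : n = a + m + 1 := by omega
  have hcd : (d : ℝ) = (m : ℝ) + 1 := by rw [hdm]; push_cast; ring
  have hcn : (n : ℝ) = (a : ℝ) + m + 1 := by rw [hn]; push_cast; ring
  have hcnd : (n : ℝ) - d = (a : ℝ) := by rw [hcn, hcd]; ring
  have hcd1 : (d : ℝ) - 1 = (m : ℝ) := by rw [hcd]; ring
  -- the key product evaluation
  have hfac : ∀ b : ℕ, ((b.factorial : ℝ)) ≠ 0 :=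
    fun b => Nat.cast_ne_zero.mpr b.factorial_ne_zero
  have key : ∏ k ∈ Finset.Icc 1 m, (1 - ((d : ℝ) - 1) / ((n : ℝ) - d + k)) =
      ((a.factorial : ℝ))^2 / (((a - m).factorial : ℝ) * ((a + m).factorial : ℝ)) := by
    have step : ∀ k ∈ Finset.Icc 1 m, (1 - ((d : ℝ) - 1) / ((n : ℝ) - d + k)) =
        (((a - m : ℕ) : ℝ) + k) / (((a : ℕ) : ℝ) + k) := by
      intro k hk
      have hk1 : 1 ≤ k := (Finset.mem_Icc.mp hk).1
      have hpos : (0 : ℝ) < (a : ℝ) + k := by positivity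
      have hcam : ((a - m : ℕ) : ℝ) = (a : ℝ) - m := by
        push_cast [Nat.cast_sub hma.le]; ring
      rw [hcd1, hcnd, hcam]
      field_simp
      ring
    rw [Finset.prod_congr rfl step, Finset.prod_div_distrib,
        prodIcc_fact_real, prodIcc_fact_real]
    have : a - m + m = a := by omega
    rw [this]
    field_simp
  -- choose casts
  have hch1 : ((a.choose m : ℕ) : ℝ) =
      (a.factorial : ℝ) / ((m.factorial : ℝ) * ((a - m).factorial : ℝ)) :=
    Nat.cast_choose ℝ hma.le
  have hch2 : ((n.choose d : ℕ) : ℝ) =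
      (n.factorial : ℝ) / ((d.factorial : ℝ) * ((n - d).factorial : ℝ)) :=
    Nat.cast_choose ℝ hdn
  have hnfac : (n.factorial : ℝ) = ((a + m + 1) : ℝ) * ((a + m).factorial : ℝ) := by
    rw [hn, Nat.factorial_succ]; push_cast; ring
  have hdfac : (d.factorial : ℝ) = ((m : ℝ) + 1) * (m.factorial : ℝ) := by
    rw [hdm, Nat.factorial_succ]; push_cast; ring
  have hchpos : (0 : ℝ) < (n.choose d : ℝ) := by
    have : 0 < n.choose d := Nat.choose_pos hdn
    exact_mod_cast this
  have heq : ((d : ℝ) * ((n - d).choose (d - 1) : ℝ)) / (n.choose d : ℝ) =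
      ((d : ℝ) ^ 2 / n) *
        ∏ k ∈ Finset.Icc 1 (d - 1), (1 - ((d : ℝ) - 1) / ((n : ℝ) - d + k)) := by
    rw [← hm, ← ha, key, hch1, hch2, hnfac, hdfac, ← ha, hcd, hcn]
    have h1 : (0:ℝ) < (a:ℝ) + m + 1 := by positivity
    field_simp
  refine ⟨heq, ?_⟩
  rw [heq]
  have hdn0 : (0 : ℝ) ≤ (d : ℝ) ^ 2 / n := by positivity
  refine mul_le_mul_of_nonneg_left ?_ hdn0
  rw [← hm]
  -- bound the product by exp
  have hbound : ∏ k ∈ Finset.Icc 1 m, (1 - ((d : ℝ) - 1) / ((n : ℝ) - d + k)) ≤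
      Real.exp (-∑ k ∈ Finset.Icc 1 m, (m : ℝ) / ((a : ℝ) + k)) := by
    have h0 : ∀ k ∈ Finset.Icc 1 m, (0:ℝ) ≤ 1 - ((d : ℝ) - 1) / ((n : ℝ) - d + k) := by
      intro k hk
      have hk1 : 1 ≤ k := (Finset.mem_Icc.mp hk).1
      have hpos : (0 : ℝ) < (n:ℝ) - d + k := by rw [hcnd]; positivity
      have hle : ((d:ℝ) - 1) / ((n:ℝ) - d + k) ≤ 1 := by
        rw [div_le_one hpos, hcd1, hcnd]
        have : (m:ℝ) ≤ (a:ℝ) := by exact_mod_cast hma.le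
        have : (0:ℝ) ≤ (k:ℝ) := by positivity
        linarith
      linarith
    have hle : ∀ k ∈ Finset.Icc 1 m, (1 - ((d : ℝ) - 1) / ((n : ℝ) - d + k)) ≤
        Real.exp (-((m : ℝ) / ((a : ℝ) + k))) := by
      intro k hk
      have := Real.add_one_le_exp (-((m : ℝ) / ((a : ℝ) + k)))
      rw [hcd1, hcnd]
      linarith
    calc ∏ k ∈ Finset.Icc 1 m, (1 - ((d : ℝ) - 1) / ((n : ℝ) - d + k))
        ≤ ∏ k ∈ Finset.Icc 1 m, Real.exp (-((m : ℝ) / ((a : ℝ) + k))) :=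
          Finset.prod_le_prod h0 hle
      _ = Real.exp (∑ k ∈ Finset.Icc 1 m, -((m : ℝ) / ((a : ℝ) + k))) :=
          (Real.exp_sum _ _).symm
      _ = Real.exp (-∑ k ∈ Finset.Icc 1 m, (m : ℝ) / ((a : ℝ) + k)) := by
          rw [Finset.sum_neg_distrib]
  refine hbound.trans (Real.exp_le_exp.mpr ?_)
  have hsum : (m : ℝ) * ((m : ℝ) / ((a : ℝ) + m)) ≤
      ∑ k ∈ Finset.Icc 1 m, (m : ℝ) / ((a : ℝ) + k) := by
    have hcard : (Finset.Icc 1 m).card = m := by simp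
    have := Finset.card_nsmul_le_sum (Finset.Icc 1 m)
      (fun k => (m : ℝ) / ((a : ℝ) + k)) ((m : ℝ) / ((a : ℝ) + m)) ?_
    · rw [hcard] at this
      simpa [nsmul_eq_mul] using this
    · intro k hk
      obtain ⟨hk1, hk2⟩ := Finset.mem_Icc.mp hk
      have hp1 : (0:ℝ) < (a:ℝ) + k := by positivity
      have ha1 : (0:ℝ) < (a:ℝ) := by exact_mod_cast Nat.pos_of_ne_zero (by omega)
      have hm0 : (0:ℝ) ≤ (m:ℝ) := Nat.cast_nonneg m
      have hp2 : (0:ℝ) < (a:ℝ) + m := by linarith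
      apply div_le_div_of_nonneg_left (by positivity) hp1
      have : (k:ℝ) ≤ (m:ℝ) := by exact_mod_cast hk2
      linarith
  have hnm1 : (n:ℝ) - 1 = (a:ℝ) + m := by rw [hcn]; ring
  rw [hcd1, hnm1, neg_div]
  have ha1 : (0:ℝ) < (a:ℝ) := by exact_mod_cast Nat.pos_of_ne_zero (by omega)
  have hm0 : (0:ℝ) ≤ (m:ℝ) := Nat.cast_nonneg m
  have hp : (0:ℝ) < (a:ℝ) + m := by linarith
  rw [neg_le_neg_iff, pow_two, mul_div_assoc]
  exact hsum
end

section
/- Let x_1, ..., x_n be i.i.d. real random variables with E[x_1²] = 1 and E[x_1⁴] < ∞, let 1 ≤ d ≤ n, and define Z_0 ∈ ℝ^N, N = C(n,d), with coordinates Z_{0,(i_1,...,i_d)} = x_{i_1} x_{i_2} ⋯ x_{i_d} indexed by the d-element subsets {i_1 < ... < i_d} of {1,...,n}. Then E[‖Z_0‖²] = N and Var(‖Z_0‖²) = C(n,d) · Σ_{k=1}^{d} ((E[x_1⁴])^k - 1) · C(d,k) · C(n-d, d-k). -/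
open MeasureTheory ProbabilityTheory

lemma aux_prod_indep {Ω : Type*} [MeasureSpace Ω] [IsProbabilityMeasure (ℙ : Measure Ω)]
    {ι : Type*} (f : ι → Ω → ℝ) (hindep : iIndepFun f ℙ)
    (hmeas : ∀ i, Measurable (f i))
    (hint : ∀ i, Integrable (f i) ℙ) (u : Finset ι) :
    Integrable (fun ω => ∏ i ∈ u, f i ω) ℙ ∧
      (∫ ω, ∏ i ∈ u, f i ω) = ∏ i ∈ u, ∫ ω, f i ω := by
  classical
  induction u using Finset.cons_induction with
  | empty => simp
  | cons a u ha ih =>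
    have hfe : (∏ j ∈ u, f j) = fun ω => ∏ j ∈ u, f j ω := by
      funext ω; simp [Finset.prod_apply]
    have hindepF : IndepFun (∏ j ∈ u, f j) (f a) ℙ :=
      hindep.indepFun_finsetProd_of_notMem hmeas ha
    have h1 : Integrable ((∏ j ∈ u, f j) * f a) ℙ :=
      hindepF.integrable_mul (by rw [hfe]; exact ih.1) (hint a)
    have h2 : (∫ ω, ((∏ j ∈ u, f j) * f a) ω) = (∫ ω, (∏ j ∈ u, f j) ω) * ∫ ω, f a ω :=
      hindepF.integral_mul_eq_mul_integral (by rw [hfe]; exact ih.1.aestronglyMeasurable)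
        (hint a).aestronglyMeasurable
    rw [hfe] at h1 h2
    simp only [Pi.mul_apply] at h1 h2
    constructor
    · have heq : (fun ω => ∏ i ∈ Finset.cons a u ha, f i ω)
          = fun ω => (∏ j ∈ u, f j ω) * f a ω := by
        funext ω; rw [Finset.prod_cons]; ring
      rw [heq]; exact h1
    · simp only [Finset.prod_cons]
      rw [show (∫ ω, f a ω * ∏ i ∈ u, f i ω) = ∫ ω, (∏ i ∈ u, f i ω) * f a ω from by
        congr 1; funext ω; ring, h2, ih.2]
      ring

lemma aux_count {n d k : ℕ} (s : Finset (Fin n)) (hs : s.card = d) (hk : k ≤ d) :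
    ((Finset.powersetCard d (Finset.univ : Finset (Fin n))).filter
        (fun t => (s ∩ t).card = k)).card = d.choose k * (n - d).choose (d - k) := by
  classical
  have hcompl : sᶜ.card = n - d := by
    rw [Finset.card_compl, hs, Fintype.card_fin]
  rw [show d.choose k * (n-d).choose (d-k)
      = ((Finset.powersetCard k s) ×ˢ (Finset.powersetCard (d-k) sᶜ)).card by
    rw [Finset.card_product, Finset.card_powersetCard, Finset.card_powersetCard, hs, hcompl]]
  apply Finset.card_bij' (fun t _ => (s ∩ t, t \ s)) (fun p _ => p.1 ∪ p.2)
  · intro t ht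
    simp only [Finset.mem_filter, Finset.mem_powersetCard] at ht
    obtain ⟨⟨-, htd⟩, htk⟩ := ht
    simp only [Finset.mem_product, Finset.mem_powersetCard]
    refine ⟨⟨Finset.inter_subset_left, htk⟩, fun a ha => ?_, ?_⟩
    · simp only [Finset.mem_sdiff] at ha
      simp [Finset.mem_compl, ha.2]
    · have h1 : (t \ s).card + (t ∩ s).card = t.card := Finset.card_sdiff_add_card_inter t s
      rw [Finset.inter_comm] at htk
      omega
  · intro p hp
    simp only [Finset.mem_product, Finset.mem_powersetCard] at hp
    obtain ⟨⟨h1s, h1c⟩, h2s, h2c⟩ := hp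
    have hdisj : Disjoint p.1 p.2 := by
      rw [Finset.disjoint_left]
      intro a ha1 ha2
      exact (Finset.mem_compl.mp (h2s ha2)) (h1s ha1)
    have hins : s ∩ (p.1 ∪ p.2) = p.1 := by
      rw [Finset.inter_union_distrib_left,
        Finset.inter_eq_right.mpr h1s,
        show s ∩ p.2 = ∅ from Finset.eq_empty_of_forall_notMem fun a ha => by
          have := Finset.mem_of_mem_inter_right ha
          exact (Finset.mem_compl.mp (h2s this)) (Finset.mem_of_mem_inter_left ha),
        Finset.union_empty]
    simp only [Finset.mem_filter, Finset.mem_powersetCard]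
    refine ⟨⟨Finset.subset_univ _, ?_⟩, by rw [hins, h1c]⟩
    rw [Finset.card_union_of_disjoint hdisj, h1c, h2c]
    omega
  · intro t ht
    simp only []
    ext a; simp only [Finset.mem_union, Finset.mem_inter, Finset.mem_sdiff]; tauto
  · intro p hp
    simp only [Finset.mem_product, Finset.mem_powersetCard] at hp
    obtain ⟨⟨h1s, h1c⟩, h2s, h2c⟩ := hp
    have hins : s ∩ (p.1 ∪ p.2) = p.1 := by
      rw [Finset.inter_union_distrib_left,
        Finset.inter_eq_right.mpr h1s,
        show s ∩ p.2 = ∅ from Finset.eq_empty_of_forall_notMem fun a ha => by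
          have := Finset.mem_of_mem_inter_right ha
          exact (Finset.mem_compl.mp (h2s this)) (Finset.mem_of_mem_inter_left ha),
        Finset.union_empty]
    have hsd : (p.1 ∪ p.2) \ s = p.2 := by
      rw [Finset.union_sdiff_distrib,
        Finset.sdiff_eq_empty_iff_subset.mpr h1s,
        Finset.empty_union,
        Finset.sdiff_eq_self_iff_disjoint.mpr (by
          rw [Finset.disjoint_left]; intro a ha has
          exact (Finset.mem_compl.mp (h2s ha)) has)]
    rw [hins, hsd]

theorem stmt_12 {Ω : Type*} [MeasureSpace Ω] [IsProbabilityMeasure (ℙ : Measure Ω)]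
    (n d : ℕ) (hd : 1 ≤ d) (hdn : d ≤ n)
    (x : Fin n → Ω → ℝ) (hmeas : ∀ i, Measurable (x i))
    (hindep : iIndepFun x ℙ)
    (hident : ∀ i j, IdentDistrib (x i) (x j) ℙ ℙ)
    (hm2 : ∀ i, ∫ ω, (x i ω) ^ 2 = 1)
    (hm4int : ∀ i, Integrable (fun ω => (x i ω) ^ 4) ℙ)
    (B : ℝ) (hB : ∀ i, ∫ ω, (x i ω) ^ 4 = B) :
    (∫ ω, ∑ s ∈ Finset.powersetCard d (Finset.univ : Finset (Fin n)),
        (∏ i ∈ s, x i ω) ^ 2) = (n.choose d : ℝ) ∧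
      variance (fun ω => ∑ s ∈ Finset.powersetCard d (Finset.univ : Finset (Fin n)),
          (∏ i ∈ s, x i ω) ^ 2) ℙ =
        (n.choose d : ℝ) * ∑ k ∈ Finset.Icc 1 d,
          (B ^ k - 1) * (d.choose k : ℝ) * ((n - d).choose (d - k) : ℝ) := by
  classical
  set P := Finset.powersetCard d (Finset.univ : Finset (Fin n)) with hP
  have hPcard : P.card = n.choose d := by
    rw [hP, Finset.card_powersetCard, Finset.card_univ, Fintype.card_fin]
  -- integrability of squares
  have hint2 : ∀ i, Integrable (fun ω => (x i ω) ^ 2) ℙ := by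
    intro i
    refine Integrable.mono' ((integrable_const (1:ℝ)).add (hm4int i))
      ((hmeas i).pow_const 2).aestronglyMeasurable
      (Filter.Eventually.of_forall fun ω => ?_)
    have h := sq_nonneg ((x i ω) ^ 2 - 1)
    rw [Real.norm_eq_abs, abs_of_nonneg (sq_nonneg _)]
    simp only [Pi.add_apply]
    nlinarith [sq_nonneg (x i ω)]
  -- the key evaluation of integrals of products
  have hKey : ∀ s t : Finset (Fin n),
      Integrable (fun ω => (∏ i ∈ s, (x i ω) ^ 2) * (∏ i ∈ t, (x i ω) ^ 2)) ℙ ∧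
      (∫ ω, (∏ i ∈ s, (x i ω) ^ 2) * (∏ i ∈ t, (x i ω) ^ 2)) = B ^ (s ∩ t).card := by
    intro s t
    set g : Fin n → ℝ → ℝ := fun i r => r ^ 2 * (if i ∈ s ∩ t then r ^ 2 else 1) with hg
    have hgmeas : ∀ i, Measurable (g i) := by
      intro i; by_cases h : i ∈ s ∩ t <;> simp only [hg, h, if_true, if_false] <;> fun_prop
    have hgint : ∀ i, Integrable (fun ω => g i (x i ω)) ℙ := by
      intro i; by_cases h : i ∈ s ∩ t
      · simp only [hg, h, if_true]
        have : (fun ω => (x i ω) ^ 2 * (x i ω) ^ 2) = fun ω => (x i ω) ^ 4 := by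
          funext ω; ring
        rw [this]; exact hm4int i
      · simp only [hg, h, if_false, mul_one]; exact hint2 i
    have hgindep : iIndepFun (fun i => g i ∘ x i) ℙ :=
      hindep.comp g hgmeas
    have haux := aux_prod_indep (fun i => g i ∘ x i) hgindep
      (fun i => (hgmeas i).comp (hmeas i)) hgint (s ∪ t)
    have hpt : (fun ω => (∏ i ∈ s, (x i ω) ^ 2) * (∏ i ∈ t, (x i ω) ^ 2))
        = fun ω => ∏ i ∈ s ∪ t, (g i ∘ x i) ω := by
      funext ω
      simp only [Function.comp_apply, hg]
      rw [Finset.prod_mul_distrib, Finset.prod_ite_mem,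
        show (s ∪ t) ∩ (s ∩ t) = s ∩ t from
          Finset.inter_eq_right.mpr (Finset.inter_subset_left.trans Finset.subset_union_left),
        ← Finset.prod_union_inter]
    have hgval : ∀ i, (∫ ω, (g i ∘ x i) ω) = if i ∈ s ∩ t then B else 1 := by
      intro i; by_cases h : i ∈ s ∩ t
      · simp only [Function.comp_apply, hg, h, if_true]
        rw [show (∫ ω, (x i ω) ^ 2 * (x i ω) ^ 2) = ∫ ω, (x i ω) ^ 4 from by
          congr 1; funext ω; ring, hB i]
      · simp only [Function.comp_apply, hg, h, if_false, mul_one]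
        rw [hm2 i]
    constructor
    · rw [hpt]; exact haux.1
    · rw [show (∫ ω, (∏ i ∈ s, (x i ω) ^ 2) * (∏ i ∈ t, (x i ω) ^ 2))
          = ∫ ω, ∏ i ∈ s ∪ t, (g i ∘ x i) ω from by rw [hpt], haux.2]
      rw [Finset.prod_congr rfl fun i _ => hgval i, Finset.prod_ite_mem,
        show (s ∪ t) ∩ (s ∩ t) = s ∩ t from
          Finset.inter_eq_right.mpr (Finset.inter_subset_left.trans Finset.subset_union_left),
        Finset.prod_const]
  have hInt1 : ∀ s : Finset (Fin n), Integrable (fun ω => ∏ i ∈ s, (x i ω) ^ 2) ℙ := by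
    intro s; have := (hKey s ∅).1; simpa using this
  have hEval1 : ∀ s : Finset (Fin n), (∫ ω, ∏ i ∈ s, (x i ω) ^ 2) = 1 := by
    intro s; have := (hKey s ∅).2; simpa using this
  have hsq : ∀ (s : Finset (Fin n)) (ω : Ω),
      (∏ i ∈ s, x i ω) ^ 2 = ∏ i ∈ s, (x i ω) ^ 2 := fun s ω => by
    rw [Finset.prod_pow]
  simp only [hsq]
  have hEX : (∫ ω, ∑ s ∈ P, ∏ i ∈ s, (x i ω) ^ 2) = (P.card : ℝ) := by
    rw [integral_finset_sum _ fun s _ => hInt1 s]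
    simp [hEval1]
  constructor
  · rw [hEX, hPcard]
  · set X := fun ω => ∑ s ∈ P, ∏ i ∈ s, (x i ω) ^ 2 with hX
    have hXm : AEStronglyMeasurable X ℙ :=
      (Finset.measurable_sum _ fun s _ =>
        Finset.measurable_prod _ fun i _ => (hmeas i).pow_const 2).aestronglyMeasurable
    have hX2eq : (fun ω => X ω ^ 2)
        = fun ω => ∑ s ∈ P, ∑ t ∈ P, (∏ i ∈ s, (x i ω) ^ 2) * (∏ i ∈ t, (x i ω) ^ 2) := by
      funext ω; rw [sq, Finset.sum_mul_sum]
    have hX2int : Integrable (fun ω => X ω ^ 2) ℙ := by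
      rw [hX2eq]
      exact integrable_finset_sum _ fun s _ => integrable_finset_sum _ fun t _ => (hKey s t).1
    have hmem : MemLp X 2 ℙ := (memLp_two_iff_integrable_sq hXm).mpr hX2int
    have hEX2 : (∫ ω, X ω ^ 2) = ∑ s ∈ P, ∑ t ∈ P, B ^ (s ∩ t).card := by
      rw [hX2eq, integral_finset_sum _ fun s _ =>
        integrable_finset_sum _ fun t _ => (hKey s t).1]
      refine Finset.sum_congr rfl fun s _ => ?_
      rw [integral_finset_sum _ fun t _ => (hKey s t).1]
      exact Finset.sum_congr rfl fun t _ => (hKey s t).2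
    have hinner : ∀ s ∈ P, (∑ t ∈ P, (B ^ (s ∩ t).card - 1))
        = ∑ k ∈ Finset.Icc 1 d, (B ^ k - 1) * (d.choose k : ℝ) * ((n - d).choose (d - k) : ℝ) := by
      intro s hsP
      have hscard : s.card = d := (Finset.mem_powersetCard.mp hsP).2
      have hfilter : P.filter (fun t => (s ∩ t).card ∈ Finset.range (d + 1)) = P :=
        Finset.filter_true_of_mem fun t ht => by
          have h1 : (s ∩ t).card ≤ s.card := Finset.card_le_card Finset.inter_subset_left
          rw [Finset.mem_range]; omega
      have hfib := Finset.sum_fiberwise_eq_sum_filter P (Finset.range (d + 1))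
        (fun t => (s ∩ t).card) (fun t => B ^ (s ∩ t).card - 1)
      rw [hfilter] at hfib
      rw [← hfib]
      have hstep : ∀ k ∈ Finset.range (d + 1),
          (∑ t ∈ P.filter (fun t => (s ∩ t).card = k), (B ^ (s ∩ t).card - 1))
          = (B ^ k - 1) * (d.choose k : ℝ) * ((n - d).choose (d - k) : ℝ) := by
        intro k hk
        rw [Finset.mem_range] at hk
        rw [Finset.sum_congr rfl (fun t ht => by
          rw [(Finset.mem_filter.mp ht).2]), Finset.sum_const,
          aux_count s hscard (by omega)]
        push_cast
        ring
      rw [Finset.sum_congr rfl hstep]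
      rw [show Finset.range (d + 1) = insert 0 (Finset.Icc 1 d) from by
        ext m; simp only [Finset.mem_range, Finset.mem_insert, Finset.mem_Icc]; omega]
      rw [Finset.sum_insert (by simp)]
      norm_num
    rw [variance_eq_sub hmem]
    have hμX2 : (∫ ω, X ω ^ 2 ∂ℙ) = ∑ s ∈ P, ∑ t ∈ P, B ^ (s ∩ t).card := hEX2
    have hμX : (∫ ω, X ω ∂ℙ) = (P.card : ℝ) := hEX
    rw [show (ℙ : Measure Ω)[X ^ 2] = ∫ ω, X ω ^ 2 ∂ℙ from by congr, hμX2, hμX]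
    have hsplit : (∑ s ∈ P, ∑ t ∈ P, B ^ (s ∩ t).card) - (P.card : ℝ) ^ 2
        = ∑ s ∈ P, ∑ t ∈ P, (B ^ (s ∩ t).card - 1) := by
      simp only [Finset.sum_sub_distrib, Finset.sum_const, nsmul_eq_mul, mul_one]
      ring
    rw [hsplit, Finset.sum_congr rfl hinner, Finset.sum_const, nsmul_eq_mul, hPcard]
end

section
/- Let x_1, ..., x_n be i.i.d. real random variables with E[x_1²] = 1, let d ≤ n/2, and suppose E[x_1⁴] ≤ (n - 2d + 2)/(d - 1)². Let Z_0 ∈ ℝ^{C(n,d)} have coordinates equal to the products x_{i_1} ⋯ x_{i_d} over all d-subsets {i_1 < ... < i_d} of {1,...,n}, and N = C(n,d). Then Var(‖Z_0‖²) ≤ 2 N² · E[x_1⁴] · (d²/n) · e^{-(d-1)²/(n-1)}. -/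
open MeasureTheory ProbabilityTheory Finset

lemma aux_int_prod {Ω : Type*} [MeasureSpace Ω] [IsProbabilityMeasure (ℙ : Measure Ω)]
    {ι : Type*} [DecidableEq ι] {y : ι → Ω → ℝ}
    (hindep : iIndepFun y ℙ)
    (hmeas : ∀ i, Measurable (y i)) (hint : ∀ i, Integrable (y i) ℙ)
    (u : Finset ι) :
    Integrable (fun ω => ∏ i ∈ u, y i ω) ℙ ∧
      (∫ ω, ∏ i ∈ u, y i ω) = ∏ i ∈ u, ∫ ω, y i ω := by
  induction u using Finset.induction_on with
  | empty => simp
  | @insert a u ha ih =>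
    have hIF : IndepFun (∏ j ∈ u, y j) (y a) ℙ :=
      hindep.indepFun_finsetProd_of_notMem hmeas ha
    have hprodeq : (∏ j ∈ u, y j) = fun ω => ∏ j ∈ u, y j ω := by
      funext ω; simp [Finset.prod_apply]
    rw [hprodeq] at hIF
    have hIF' := hIF.symm
    have hpm : AEStronglyMeasurable (fun ω => ∏ j ∈ u, y j ω) (ℙ : Measure Ω) :=
      (Finset.measurable_prod u fun i _ => hmeas i).aestronglyMeasurable
    constructor
    · have := hIF'.integrable_mul (hint a) ih.1
      simpa [Finset.prod_insert ha, Pi.mul_def] using this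
    · have hmul := hIF'.integral_mul_eq_mul_integral (hmeas a).aestronglyMeasurable hpm
      have : (∫ ω, y a ω * ∏ j ∈ u, y j ω) = (∫ ω, y a ω) * ∫ ω, ∏ j ∈ u, y j ω := by
        simpa using hmul
      rw [show (fun ω => ∏ i ∈ insert a u, y i ω) = fun ω => y a ω * ∏ j ∈ u, y j ω by
        funext ω; rw [Finset.prod_insert ha], this, ih.2, Finset.prod_insert ha]

lemma aux_geom : ∀ m : ℕ, (∑ j ∈ Finset.range m, ((1:ℝ)/2)^j) ≤ 2 := by
  have key : ∀ m : ℕ, (∑ j ∈ Finset.range m, ((1:ℝ)/2)^j) = 2 - 2 * (1/2)^m := by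
    intro m
    induction m with
    | zero => simp
    | succ m ih => rw [Finset.sum_range_succ, ih]; ring
  intro m
  rw [key]
  have : (0:ℝ) ≤ (1/2)^m := by positivity
  linarith

set_option maxHeartbeats 1600000 in
theorem stmt_13 {Ω : Type*} [MeasureSpace Ω] [IsProbabilityMeasure (ℙ : Measure Ω)]
    (n d : ℕ) (hd : 1 ≤ d) (hdn : 2 * d ≤ n)
    (x : Fin n → Ω → ℝ) (hmeas : ∀ i, Measurable (x i))
    (hindep : iIndepFun x ℙ)
    (hident : ∀ i j, IdentDistrib (x i) (x j) ℙ ℙ)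
    (hm2 : ∀ i, ∫ ω, (x i ω) ^ 2 = 1)
    (hm4int : ∀ i, Integrable (fun ω => (x i ω) ^ 4) ℙ)
    (B : ℝ) (hB : ∀ i, ∫ ω, (x i ω) ^ 4 = B)
    (hBsmall : B ≤ ((n : ℝ) - 2 * d + 2) / ((d : ℝ) - 1) ^ 2) :
    variance (fun ω => ∑ s ∈ Finset.powersetCard d (Finset.univ : Finset (Fin n)),
        (∏ i ∈ s, x i ω) ^ 2) ℙ ≤
      2 * (n.choose d : ℝ) ^ 2 * B * ((d : ℝ) ^ 2 / n) *
        Real.exp (-((d : ℝ) - 1) ^ 2 / ((n : ℝ) - 1)) := by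
  classical
  -- basic integrability
  have hx2 : ∀ i, Integrable (fun ω => (x i ω) ^ 2) ℙ := by
    intro i
    refine ((integrable_const (1:ℝ)).add (hm4int i)).mono'
      (((hmeas i).pow_const 2).aestronglyMeasurable) (ae_of_all _ fun ω => ?_)
    simp only [Pi.add_apply]
    rw [Real.norm_eq_abs, abs_of_nonneg (by positivity)]
    nlinarith [sq_nonneg ((x i ω)^2 - 1), sq_nonneg (x i ω)]
  -- B ≥ 1
  have npos : 0 < n := by omega
  have i0 : Fin n := ⟨0, npos⟩
  have hB1 : (1:ℝ) ≤ B := by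
    have hnn : 0 ≤ ∫ ω, ((x i0 ω)^2 - 1)^2 :=
      integral_nonneg fun ω => sq_nonneg _
    have hcalc : (∫ ω, ((x i0 ω)^2 - 1)^2) = B - 1 := by
      have h1 : (fun ω => ((x i0 ω)^2 - 1)^2)
          = fun ω => (x i0 ω)^4 - (2*(x i0 ω)^2 - 1) := by funext ω; ring
      have hint1 : Integrable (fun ω => 2*(x i0 ω)^2 - 1) ℙ :=
        ((hx2 i0).const_mul 2).sub (integrable_const 1)
      rw [h1, integral_sub (hm4int i0) hint1,
        integral_sub ((hx2 i0).const_mul 2) (integrable_const 1), MeasureTheory.integral_const_mul,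
        hm2, hB]
      simp; ring
    linarith [hcalc ▸ hnn]
  have hB0 : (0:ℝ) ≤ B := by linarith
  -- d = 1 is contradictory
  rcases eq_or_lt_of_le hd with hd1 | hd2
  · exfalso
    have : ((d:ℝ) - 1)^2 = 0 := by rw [← hd1]; norm_num
    rw [this, div_zero] at hBsmall
    linarith
  have hd2 : 2 ≤ d := hd2
  set Pow_d : Finset (Finset (Fin n)) := Finset.powersetCard d (Finset.univ : Finset (Fin n))
    with hPow_d
  set P : Finset (Fin n) → Ω → ℝ := fun s ω => ∏ i ∈ s, (x i ω)^2 with hPdef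
  -- pair moments
  have hPP : ∀ s t : Finset (Fin n),
      Integrable (fun ω => P s ω * P t ω) ℙ ∧
        (∫ ω, P s ω * P t ω) = B ^ (s ∩ t).card := by
    intro s t
    set g : Fin n → ℝ → ℝ := fun i a => a^2 * (if i ∈ s ∩ t then a^2 else 1) with hg
    have hgmeas : ∀ i, Measurable (g i) := by
      intro i
      by_cases h : i ∈ s ∩ t <;> simp only [hg, h, if_true, if_false, mul_one] <;> fun_prop
    have hy : iIndepFun (fun i => g i ∘ x i) ℙ :=
      hindep.comp g hgmeas
    have hymeas : ∀ i, Measurable (fun ω => g i (x i ω)) := fun i => (hgmeas i).comp (hmeas i)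
    have hyint : ∀ i, Integrable (fun ω => g i (x i ω)) ℙ := by
      intro i
      by_cases h : i ∈ s ∩ t
      · have heq : (fun ω => g i (x i ω)) = fun ω => (x i ω)^4 := by
          funext ω; simp only [hg, h, if_true]; ring
        rw [heq]; exact hm4int i
      · have heq : (fun ω => g i (x i ω)) = fun ω => (x i ω)^2 := by
          funext ω; simp only [hg, h, if_false, mul_one]
        rw [heq]; exact hx2 i
    have hyval : ∀ i, (∫ ω, g i (x i ω)) = if i ∈ s ∩ t then B else 1 := by
      intro i
      by_cases h : i ∈ s ∩ t
      · have heq : (fun ω => g i (x i ω)) = fun ω => (x i ω)^4 := by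
          funext ω; simp only [hg, h, if_true]; ring
        simp only [h, if_true]; rw [heq]; exact hB i
      · have heq : (fun ω => g i (x i ω)) = fun ω => (x i ω)^2 := by
          funext ω; simp only [hg, h, if_false, mul_one]
        simp only [h, if_false]; rw [heq]; exact hm2 i
    have haux := aux_int_prod (y := fun i ω => g i (x i ω)) hy hymeas hyint (s ∪ t)
    have h3 : (s ∪ t) ∩ (s ∩ t) = s ∩ t := by
      rw [Finset.inter_eq_right]
      exact (Finset.inter_subset_left).trans Finset.subset_union_left
    have heqf : (fun ω => P s ω * P t ω) = fun ω => ∏ i ∈ s ∪ t, g i (x i ω) := by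
      funext ω
      have h1 : (∏ i ∈ s ∪ t, g i (x i ω))
          = (∏ i ∈ s ∪ t, (x i ω)^2) * ∏ i ∈ s ∪ t, (if i ∈ s ∩ t then (x i ω)^2 else 1) := by
        rw [← Finset.prod_mul_distrib]
      have h2 : (∏ i ∈ s ∪ t, (if i ∈ s ∩ t then (x i ω)^2 else 1))
          = ∏ i ∈ (s ∪ t) ∩ (s ∩ t), (x i ω)^2 := Finset.prod_ite_mem _ _ _
      rw [h1, h2, h3, Finset.prod_union_inter]
    refine ⟨heqf ▸ haux.1, ?_⟩
    rw [heqf, haux.2, Finset.prod_congr rfl (fun i _ => hyval i), Finset.prod_ite_mem, h3,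
      Finset.prod_const]
  -- single moments
  have hP1 : ∀ s : Finset (Fin n), Integrable (P s) ℙ ∧ (∫ ω, P s ω) = 1 := by
    intro s
    have hy : iIndepFun (fun i => (fun a : ℝ => a^2) ∘ x i) ℙ :=
      hindep.comp _ (fun i => by fun_prop)
    have haux := aux_int_prod (y := fun i ω => (x i ω)^2) hy
      (fun i => (hmeas i).pow_const 2) hx2 s
    exact ⟨haux.1, by rw [haux.2, Finset.prod_congr rfl (fun i _ => hm2 i), Finset.prod_const_one]⟩
  -- the random variable
  set Z : Ω → ℝ := fun ω => ∑ s ∈ Pow_d, P s ω with hZdef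
  have hZrw : (fun ω => ∑ s ∈ Pow_d, (∏ i ∈ s, x i ω)^2) = Z := by
    funext ω
    exact Finset.sum_congr rfl fun s _ => (Finset.prod_pow s 2 (fun i => x i ω)).symm
  rw [hZrw]
  have hZmeas : Measurable Z :=
    Finset.measurable_sum _ fun s _ => Finset.measurable_prod _ fun i _ => (hmeas i).pow_const 2
  have hZsq : (fun ω => Z ω ^ 2) = fun ω => ∑ s ∈ Pow_d, ∑ t ∈ Pow_d, P s ω * P t ω := by
    funext ω; rw [sq, Finset.sum_mul_sum]
  have hZsqint : Integrable (fun ω => Z ω ^ 2) ℙ := by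
    rw [hZsq]
    exact integrable_finset_sum _ fun s _ => integrable_finset_sum _ fun t _ => (hPP s t).1
  have hmem : MemLp Z 2 ℙ := (memLp_two_iff_integrable_sq hZmeas.aestronglyMeasurable).2 hZsqint
  have hcardPow_d : (Pow_d.card : ℝ) = (n.choose d : ℝ) := by
    simp [hPow_d, Finset.card_powersetCard]
  have hEZ : (∫ ω, Z ω) = (n.choose d : ℝ) := by
    rw [hZdef]
    rw [integral_finset_sum _ fun s _ => (hP1 s).1,
      Finset.sum_congr rfl fun s _ => (hP1 s).2, Finset.sum_const, nsmul_eq_mul, mul_one]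
    exact hcardPow_d
  have hEZ2 : (∫ ω, Z ω ^ 2) = ∑ s ∈ Pow_d, ∑ t ∈ Pow_d, B ^ (s ∩ t).card := by
    rw [hZsq, integral_finset_sum _ fun s _ => integrable_finset_sum _ fun t _ => (hPP s t).1]
    refine Finset.sum_congr rfl fun s _ => ?_
    rw [integral_finset_sum _ fun t _ => (hPP s t).1]
    exact Finset.sum_congr rfl fun t _ => (hPP s t).2
  have hvar : variance Z ℙ = ∑ s ∈ Pow_d, ∑ t ∈ Pow_d, (B ^ (s ∩ t).card - 1) := by
    rw [variance_eq_sub hmem]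
    have e1 : (ℙ[Z ^ 2] : ℝ) = ∫ ω, Z ω ^ 2 := by
      congr 1
    have e2 : (ℙ[Z] : ℝ) = ∫ ω, Z ω := rfl
    rw [e1, e2, hEZ, hEZ2]
    simp only [Finset.sum_sub_distrib, Finset.sum_const, nsmul_eq_mul, mul_one, hPow_d,
      Finset.card_powersetCard, Finset.card_univ, Fintype.card_fin]
    ring
  -- counting pairs by intersection size
  have hcount : ∀ s ∈ Pow_d, ∀ F : ℕ → ℝ,
      (∑ t ∈ Pow_d, F ((s ∩ t).card))
        = ∑ k ∈ Finset.range (d+1), (d.choose k : ℝ) * ((n - d).choose (d - k) : ℝ) * F k := by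
    intro s hs F
    have hscard : s.card = d := (Finset.mem_powersetCard.mp hs).2
    have hcompl : sᶜ.card = n - d := by
      rw [Finset.card_compl, hscard, Fintype.card_fin]
    have h1 : (∑ t ∈ Pow_d, F ((s ∩ t).card))
        = ∑ p ∈ s.powerset.sigma (fun a => Finset.powersetCard (d - a.card) sᶜ), F p.1.card := by
      refine Finset.sum_nbij' (fun t => ⟨t ∩ s, t \ s⟩) (fun p => p.1 ∪ p.2) ?_ ?_ ?_ ?_ ?_
      · intro t ht
        have htc : t.card = d := (Finset.mem_powersetCard.mp ht).2
        rw [Finset.mem_sigma]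
        refine ⟨Finset.mem_powerset.mpr Finset.inter_subset_right, ?_⟩
        rw [Finset.mem_powersetCard]
        refine ⟨fun i hi => ?_, ?_⟩
        · rw [Finset.mem_compl]; exact (Finset.mem_sdiff.mp hi).2
        · dsimp only
          have h := Finset.card_inter_add_card_sdiff t s
          omega
      · intro p hp
        rw [Finset.mem_sigma] at hp
        obtain ⟨hp1, hp2⟩ := hp
        rw [Finset.mem_powerset] at hp1
        rw [Finset.mem_powersetCard] at hp2
        rw [hPow_d, Finset.mem_powersetCard]
        refine ⟨Finset.subset_univ _, ?_⟩
        have hdisj : Disjoint p.1 p.2 :=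
          Finset.disjoint_left.mpr fun a ha hb => (Finset.mem_compl.mp (hp2.1 hb)) (hp1 ha)
        rw [Finset.card_union_of_disjoint hdisj, hp2.2]
        have hle : p.1.card ≤ d := hscard ▸ Finset.card_le_card hp1
        omega
      · intro t ht
        dsimp only
        ext i
        simp only [Finset.mem_union, Finset.mem_inter, Finset.mem_sdiff]
        tauto
      · intro p hp
        rw [Finset.mem_sigma] at hp
        obtain ⟨hp1, hp2⟩ := hp
        rw [Finset.mem_powerset] at hp1
        rw [Finset.mem_powersetCard] at hp2
        obtain ⟨a, b⟩ := p
        dsimp only at hp1 hp2 ⊢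
        have hbs : ∀ i ∈ b, i ∉ s := fun i hi => Finset.mem_compl.mp (hp2.1 hi)
        have e1 : (a ∪ b) ∩ s = a := by
          ext i
          simp only [Finset.mem_inter, Finset.mem_union]
          constructor
          · rintro ⟨hi1 | hi1, hi2⟩
            · exact hi1
            · exact absurd hi2 (hbs i hi1)
          · intro hi; exact ⟨Or.inl hi, hp1 hi⟩
        have e2 : (a ∪ b) \ s = b := by
          ext i
          simp only [Finset.mem_sdiff, Finset.mem_union]
          constructor
          · rintro ⟨hi1 | hi1, hi2⟩
            · exact absurd (hp1 hi1) hi2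
            · exact hi1
          · intro hi; exact ⟨Or.inr hi, hbs i hi⟩
        rw [e1, e2]
      · intro t ht
        dsimp only
        rw [Finset.inter_comm]
    rw [h1, Finset.sum_sigma]
    have h2 : ∀ a ∈ s.powerset, (∑ _b ∈ Finset.powersetCard (d - a.card) sᶜ, F a.card)
        = ((n-d).choose (d - a.card) : ℝ) * F a.card := by
      intro a _
      rw [Finset.sum_const, Finset.card_powersetCard, hcompl, nsmul_eq_mul]
    rw [Finset.sum_congr rfl h2, Finset.sum_powerset, hscard]
    refine Finset.sum_congr rfl fun k _ => ?_
    have h3 : ∀ a ∈ Finset.powersetCard k s,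
        ((n-d).choose (d - a.card) : ℝ) * F a.card = ((n-d).choose (d-k) : ℝ) * F k := by
      intro a ha
      rw [(Finset.mem_powersetCard.mp ha).2]
    rw [Finset.sum_congr rfl h3, Finset.sum_const, Finset.card_powersetCard, hscard,
      nsmul_eq_mul]
    ring
  have hvar2 : variance Z ℙ = (n.choose d : ℝ) * ∑ k ∈ Finset.range (d+1),
      (d.choose k : ℝ) * ((n-d).choose (d-k) : ℝ) * (B ^ k - 1) := by
    rw [hvar, Finset.sum_congr rfl (fun s hs => hcount s hs (fun k => B ^ k - 1)),
      Finset.sum_const, nsmul_eq_mul, hcardPow_d]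
  -- analysis
  set E := Real.exp (-((d : ℝ) - 1) ^ 2 / ((n : ℝ) - 1)) with hE
  have hE0 : 0 < E := Real.exp_pos _
  set c : ℕ → ℝ := fun k => (d.choose k : ℝ) * ((n-d).choose (d-k) : ℝ) with hc
  have hc0 : ∀ k, 0 ≤ c k := fun k => by positivity
  have hN0 : (0:ℝ) ≤ (n.choose d : ℝ) := Nat.cast_nonneg _
  have hnd : 2*(d:ℝ) ≤ (n:ℝ) := by exact_mod_cast hdn
  have hdR : (2:ℝ) ≤ (d:ℝ) := by exact_mod_cast hd2
  have hstep : ∀ k, 1 ≤ k → c (k+1) * B ≤ c k * (1/2) := by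
    intro k hk
    rcases le_or_gt d k with hkd | hkd
    · have hzero : d.choose (k+1) = 0 := Nat.choose_eq_zero_of_lt (by omega)
      rw [hc]
      simp only [hzero, Nat.cast_zero, zero_mul]
      positivity
    · have hnat : (d.choose (k+1)) * ((n-d).choose (d-(k+1))) * ((k+1)*(n-2*d+k+1))
          = (d.choose k) * ((n-d).choose (d-k)) * ((d-k)*(d-k)) := by
        have e1 : d.choose (k+1) * (k+1) = d.choose k * (d - k) :=
          Nat.choose_succ_right_eq d k
        have e2 : (n-d).choose ((d-k-1)+1) * ((d-k-1)+1)
            = (n-d).choose (d-k-1) * ((n-d) - (d-k-1)) :=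
          Nat.choose_succ_right_eq (n-d) (d-k-1)
        have e3 : d - k - 1 + 1 = d - k := by omega
        have e4 : (n-d) - (d-k-1) = n-2*d+k+1 := by omega
        have e5 : d - (k+1) = d - k - 1 := by omega
        rw [e3, e4] at e2
        rw [e5]
        calc d.choose (k+1) * ((n-d).choose (d-k-1)) * ((k+1)*(n-2*d+k+1))
            = (d.choose (k+1) * (k+1)) * ((n-d).choose (d-k-1) * (n-2*d+k+1)) := by ring
          _ = (d.choose k * (d-k)) * ((n-d).choose (d-k) * (d-k)) := by rw [e1, ← e2]
          _ = d.choose k * ((n-d).choose (d-k)) * ((d-k)*(d-k)) := by ring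
      set Q : ℝ := (n:ℝ) - 2*d + k + 1 with hQ
      have hkR : (1:ℝ) ≤ (k:ℝ) := by exact_mod_cast hk
      have hcast : c (k+1) * (((k:ℝ)+1) * Q)
          = c k * (((d:ℝ)-(k:ℝ))*((d:ℝ)-(k:ℝ))) := by
        have hthis := congrArg (Nat.cast : ℕ → ℝ) hnat
        push_cast [Nat.cast_sub hkd.le, Nat.cast_sub hdn] at hthis
        rw [hc, hQ]
        linear_combination hthis
      have hq0 : (0:ℝ) < Q := by rw [hQ]; linarith
      have hq2 : (2:ℝ) ≤ (k:ℝ)+1 := by linarith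
      have hqn : ((n:ℝ) - 2*d + 2) ≤ Q := by rw [hQ]; linarith
      have hkdR : (k:ℝ) ≤ (d:ℝ) := by exact_mod_cast hkd.le
      have hdk2 : ((d:ℝ)-k)*((d:ℝ)-k) ≤ ((d:ℝ)-1)^2 := by
        have h1 : (0:ℝ) ≤ (d:ℝ)-k := by linarith
        have h2 : (d:ℝ)-k ≤ (d:ℝ)-1 := by linarith
        calc ((d:ℝ)-k)*((d:ℝ)-k) ≤ ((d:ℝ)-1)*((d:ℝ)-1) :=
              mul_le_mul h2 h2 h1 (by linarith)
          _ = ((d:ℝ)-1)^2 := by ring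
      have hd1pos : (0:ℝ) < ((d:ℝ)-1)^2 := by
        have h1 : (0:ℝ) < (d:ℝ)-1 := by linarith
        positivity
      have hBle : B * ((d:ℝ)-1)^2 ≤ (n:ℝ) - 2*d + 2 := (le_div_iff₀ hd1pos).mp hBsmall
      refine le_of_mul_le_mul_right ?_ (mul_pos (by linarith : (0:ℝ) < (k:ℝ)+1) hq0)
      have lhs_eq : c (k+1) * B * (((k:ℝ)+1)*Q)
          = (c k * B) * (((d:ℝ)-k)*((d:ℝ)-k)) := by
        linear_combination B * hcast
      rw [lhs_eq]
      have h4 : (c k * B) * (((d:ℝ)-k)*((d:ℝ)-k)) ≤ (c k * B) * ((d:ℝ)-1)^2 :=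
        mul_le_mul_of_nonneg_left hdk2 (mul_nonneg (hc0 k) hB0)
      have h6 : c k * (B * ((d:ℝ)-1)^2) ≤ c k * ((n:ℝ)-2*d+2) :=
        mul_le_mul_of_nonneg_left hBle (hc0 k)
      have h7 : c k * ((n:ℝ)-2*d+2) ≤ c k * Q :=
        mul_le_mul_of_nonneg_left hqn (hc0 k)
      have h8 : c k * Q ≤ c k * (1/2) * (((k:ℝ)+1)*Q) := by
        nlinarith [mul_nonneg (mul_nonneg (hc0 k) hq0.le)
          (show (0:ℝ) ≤ ((k:ℝ)+1)/2 - 1 by linarith)]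
      exact le_trans h4 (le_trans (le_of_eq (by ring)) (le_trans h6 (le_trans h7 h8)))
  have hgeomc : ∀ k, 1 ≤ k → c k * B^k ≤ c 1 * B * (1/2)^(k-1) := by
    intro k hk
    induction k, hk using Nat.le_induction with
    | base => simp
    | succ k hk ih =>
      calc c (k+1) * B^(k+1) = (c (k+1) * B) * B^k := by ring
        _ ≤ (c k * (1/2)) * B^k :=
            mul_le_mul_of_nonneg_right (hstep k hk) (pow_nonneg hB0 k)
        _ = (c k * B^k) * (1/2) := by ring
        _ ≤ (c 1 * B * (1/2)^(k-1)) * (1/2) :=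
            mul_le_mul_of_nonneg_right ih (by norm_num)
        _ = c 1 * B * (1/2)^(k+1-1) := by
            have hek : k+1-1 = (k-1)+1 := by omega
            rw [hek, pow_succ]; ring
  have hsum : (∑ k ∈ Finset.range (d+1), c k * (B^k - 1)) ≤ 2 * (c 1 * B) := by
    have h0 : Finset.range (d+1) = insert 0 (Finset.Ico 1 (d+1)) := by
      ext j; simp; omega
    rw [h0, Finset.sum_insert (by simp : (0:ℕ) ∉ Finset.Ico 1 (d+1))]
    simp only [pow_zero, sub_self, mul_zero, zero_add]
    calc (∑ k ∈ Finset.Ico 1 (d+1), c k * (B^k - 1))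
        ≤ ∑ k ∈ Finset.Ico 1 (d+1), c 1 * B * (1/2)^(k-1) := by
          refine Finset.sum_le_sum fun k hk => ?_
          have hk1 : 1 ≤ k := (Finset.mem_Ico.mp hk).1
          have hmono : c k * (B^k - 1) ≤ c k * B^k :=
            mul_le_mul_of_nonneg_left (by linarith [sub_le_self (B^k) zero_le_one]) (hc0 k)
          linarith [hgeomc k hk1]
      _ = c 1 * B * ∑ k ∈ Finset.Ico 1 (d+1), ((1:ℝ)/2)^(k-1) := by
          rw [Finset.mul_sum]
      _ ≤ c 1 * B * 2 := by
          refine mul_le_mul_of_nonneg_left ?_ (mul_nonneg (hc0 1) hB0)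
          have hre : (∑ k ∈ Finset.Ico 1 (d+1), ((1:ℝ)/2)^(k-1))
              = ∑ j ∈ Finset.range d, ((1:ℝ)/2)^j := by
            rw [Finset.sum_Ico_eq_sum_range]
            refine Finset.sum_congr (by congr 1) fun j _ => ?_
            congr 1
            omega
          rw [hre]
          exact aux_geom d
      _ = 2 * (c 1 * B) := by ring
  -- bound on c 1
  have hprod : ((n-d).descFactorial (d-1) : ℝ) ≤ ((n-1).descFactorial (d-1) : ℝ) * E := by
    have hcast1 : ((n-d).descFactorial (d-1) : ℝ)
        = ∏ i ∈ Finset.range (d-1), ((n:ℝ) - d - i) := by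
      rw [Nat.descFactorial_eq_prod_range, Nat.cast_prod]
      refine Finset.prod_congr rfl fun i hi => ?_
      have hi' : i < d - 1 := Finset.mem_range.mp hi
      rw [Nat.cast_sub (by omega : i ≤ n - d), Nat.cast_sub (by omega : d ≤ n)]
    have hcast2 : ((n-1).descFactorial (d-1) : ℝ)
        = ∏ i ∈ Finset.range (d-1), ((n:ℝ) - 1 - i) := by
      rw [Nat.descFactorial_eq_prod_range, Nat.cast_prod]
      refine Finset.prod_congr rfl fun i hi => ?_
      have hi' : i < d - 1 := Finset.mem_range.mp hi
      rw [Nat.cast_sub (by omega : i ≤ n - 1), Nat.cast_sub (by omega : 1 ≤ n)]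
      norm_num
    have hn1 : (0:ℝ) < (n:ℝ) - 1 := by linarith
    set eps := Real.exp (-((d:ℝ)-1)/((n:ℝ)-1)) with heps
    have heps0 : 0 ≤ eps := (Real.exp_pos _).le
    rw [hcast1, hcast2]
    calc (∏ i ∈ Finset.range (d-1), ((n:ℝ) - d - i))
        ≤ ∏ i ∈ Finset.range (d-1), (((n:ℝ) - 1 - i) * eps) := by
          refine Finset.prod_le_prod (fun i hi => ?_) (fun i hi => ?_)
          · have hi' : i < d - 1 := Finset.mem_range.mp hi
            have hiR : (i:ℝ) ≤ (d:ℝ) - 2 := by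
              have : (i:ℝ) + 1 ≤ ((d:ℝ) - 1) := by
                have h1 : (i+1 : ℕ) ≤ d - 1 := by omega
                have h2 : ((i+1:ℕ):ℝ) ≤ ((d-1:ℕ):ℝ) := by exact_mod_cast h1
                rw [Nat.cast_sub hd] at h2
                push_cast at h2
                linarith
              linarith
            linarith
          · have hi' : i < d - 1 := Finset.mem_range.mp hi
            have hiR : (i:ℝ) ≤ (d:ℝ) - 2 := by
              have h1 : (i+1 : ℕ) ≤ d - 1 := by omega
              have h2 : ((i+1:ℕ):ℝ) ≤ ((d-1:ℕ):ℝ) := by exact_mod_cast h1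
              rw [Nat.cast_sub hd] at h2
              push_cast at h2
              linarith
            have hfac : (0:ℝ) ≤ (n:ℝ) - 1 - i := by linarith
            have hexp : 1 - ((d:ℝ)-1)/((n:ℝ)-1) ≤ eps := by
              have := Real.add_one_le_exp (-((d:ℝ)-1)/((n:ℝ)-1))
              rw [heps]
              rw [neg_div] at this ⊢
              linarith
            have h9 : ((n:ℝ)-1-i) * (((d:ℝ)-1) / ((n:ℝ)-1)) ≤ (d:ℝ)-1 := by
              rw [← mul_div_assoc, div_le_iff₀ hn1]
              nlinarith [mul_nonneg (show (0:ℝ) ≤ (i:ℝ) from Nat.cast_nonneg i)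
                (show (0:ℝ) ≤ (d:ℝ)-1 by linarith)]
            have h10 : ((n:ℝ)-1-i) * (1 - ((d:ℝ)-1)/((n:ℝ)-1)) ≤ ((n:ℝ)-1-i) * eps :=
              mul_le_mul_of_nonneg_left hexp hfac
            set r := ((d:ℝ)-1)/((n:ℝ)-1) with hr
            nlinarith [h9, h10]

      _ = (∏ i ∈ Finset.range (d-1), ((n:ℝ) - 1 - i)) * eps^(d-1) := by
          rw [Finset.prod_mul_distrib, Finset.prod_const, Finset.card_range]
      _ = (∏ i ∈ Finset.range (d-1), ((n:ℝ) - 1 - i)) * E := by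
          congr 1
          rw [heps, ← Real.exp_nat_mul, hE]
          congr 1
          rw [Nat.cast_sub hd]
          push_cast
          field_simp
  have hnat2 : d * ((n-d).choose (d-1)) * n.descFactorial d
      = n.choose d * (d*d) * (n-d).descFactorial (d-1) := by
    rw [Nat.descFactorial_eq_factorial_mul_choose, Nat.descFactorial_eq_factorial_mul_choose]
    obtain ⟨e, rfl⟩ : ∃ e, d = e + 1 := ⟨d - 1, by omega⟩
    simp only [Nat.factorial_succ, Nat.add_sub_cancel]
    ring
  have hDsplit : n.descFactorial d = n * (n-1).descFactorial (d-1) := by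
    obtain ⟨e, he⟩ : ∃ e, d = e + 1 := ⟨d - 1, by omega⟩
    obtain ⟨m, hm⟩ : ∃ m, n = m + 1 := ⟨n - 1, by omega⟩
    subst he hm
    rw [Nat.succ_descFactorial_succ]
    simp
  have hc1 : c 1 ≤ (n.choose d : ℝ) * ((d:ℝ)^2 / n) * E := by
    have hD0 : (0:ℝ) < (n.descFactorial d : ℝ) := by
      have : n.descFactorial d ≠ 0 := by
        rw [Ne, Nat.descFactorial_eq_zero_iff_lt]
        omega
      exact_mod_cast Nat.pos_of_ne_zero this
    refine le_of_mul_le_mul_right ?_ hD0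
    have lhs_eq : c 1 * (n.descFactorial d : ℝ)
        = (n.choose d : ℝ) * ((d:ℝ)*(d:ℝ)) * ((n-d).descFactorial (d-1) : ℝ) := by
      have hthis := congrArg (Nat.cast : ℕ → ℝ) hnat2
      push_cast at hthis
      rw [hc]
      simp only [Nat.choose_one_right]
      push_cast
      linear_combination hthis
    rw [lhs_eq]
    have hnne : (n:ℝ) ≠ 0 := by positivity
    have rhs_eq : (n.choose d : ℝ) * ((d:ℝ)^2/n) * E * (n.descFactorial d : ℝ)
        = (n.choose d : ℝ) * ((d:ℝ)*(d:ℝ)) * (((n-1).descFactorial (d-1) : ℝ) * E) := by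
      rw [hDsplit]
      push_cast
      field_simp
    rw [rhs_eq]
    exact mul_le_mul_of_nonneg_left hprod (by positivity)
  -- final assembly
  rw [hvar2]
  calc (n.choose d : ℝ) * ∑ k ∈ Finset.range (d+1), c k * (B^k - 1)
      ≤ (n.choose d : ℝ) * (2 * (c 1 * B)) := mul_le_mul_of_nonneg_left hsum hN0
    _ ≤ (n.choose d : ℝ) * (2 * (((n.choose d : ℝ) * ((d:ℝ)^2 / n) * E) * B)) := by
        refine mul_le_mul_of_nonneg_left ?_ hN0
        have := mul_le_mul_of_nonneg_right hc1 hB0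
        linarith
    _ = 2 * (n.choose d : ℝ)^2 * B * ((d:ℝ)^2 / n) * E := by ring
end

section
/- Let n, d be positive integers with 2d ≤ n and k = ⌈d²/n⌉ satisfying 2 ≤ k ≤ d/2, and assume d ≤ n/8. Then C(d,k) · C(n-d, d-k) / C(n,d) ≥ 8^{-1} · (8 e⁴)^{-d²/n}. -/
open scoped Nat

private lemma exp_neg_two_le (x : ℝ) (hx0 : 0 ≤ x) (hx : x ≤ 1/2) :
    Real.exp (-(2*x)) ≤ 1 - x := by
  have h1 : (0:ℝ) < 1 - x := by linarith
  have hlog : 1 - (1-x)⁻¹ ≤ Real.log (1-x) := Real.one_sub_inv_le_log_of_pos h1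
  have hinv : (1-x)⁻¹ ≤ 1 + 2*x := by
    rw [inv_eq_one_div, div_le_iff₀ h1]
    nlinarith
  have : -(2*x) ≤ Real.log (1-x) := by linarith
  calc Real.exp (-(2*x)) ≤ Real.exp (Real.log (1-x)) := Real.exp_le_exp.mpr this
    _ = 1 - x := Real.exp_log h1

set_option maxHeartbeats 1000000 in
theorem stmt_15 (n d k : ℕ) (hn : 0 < n) (hd : 0 < d) (h2d : 2 * d ≤ n)
    (hk : k = ⌈(d : ℝ) ^ 2 / n⌉₊) (hk2 : 2 ≤ k) (hkd : 2 * k ≤ d) (hdn : 8 * d ≤ n) :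
    8⁻¹ * (8 * Real.exp 4) ^ (-((d : ℝ) ^ 2 / n)) ≤
      ((d.choose k : ℝ) * ((n - d).choose (d - k) : ℝ)) / (n.choose d : ℝ) := by
  set t : ℝ := (d:ℝ)^2 / n with ht
  have hnR : (0:ℝ) < n := by exact_mod_cast hn
  have hdR : (0:ℝ) < d := by exact_mod_cast hd
  have ht0 : 0 ≤ t := by positivity
  have htk : t ≤ k := hk ▸ Nat.le_ceil t
  have hkt1 : (k:ℝ) < t + 1 := hk ▸ Nat.ceil_lt_add_one ht0
  have ht1 : 1 < t := by
    have h1k : (1:ℕ) < k := hk2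
    rw [hk] at h1k
    exact_mod_cast Nat.lt_ceil.mp h1k
  have hkdn : k ≤ d := by omega
  have hdn' : d ≤ n := by omega
  set m : ℕ := d - k with hm
  have hmd : k + m = d := by omega
  have hmR : (m:ℝ) = (d:ℝ) - k := by
    rw [hm]; push_cast [hkdn]; ring
  have hXpos : (0:ℝ) < (d:ℝ) - k := by
    have : (k:ℝ) < d := by exact_mod_cast (by omega : k < d)
    linarith
  have hYpos : (0:ℝ) < (n:ℝ) - 2*d := by
    have : (2*d:ℕ) < n := by omega
    have := (Nat.cast_lt (α := ℝ)).mpr this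
    push_cast at this; linarith
  -- G1 : (d-k)^k / k! ≤ choose d k
  have G1 : ((d:ℝ) - k)^k / (k ! : ℝ) ≤ (d.choose k : ℝ) := by
    rw [div_le_iff₀ (by positivity)]
    have hnat : (d - k)^k ≤ k ! * d.choose k := by
      calc (d - k)^k ≤ (d + 1 - k)^k := Nat.pow_le_pow_left (by omega) k
        _ ≤ d.descFactorial k := Nat.pow_sub_le_descFactorial d k
        _ = k ! * d.choose k := Nat.descFactorial_eq_factorial_mul_choose d k
    calc ((d:ℝ) - k)^k = (((d - k : ℕ) : ℝ))^k := by push_cast [hkdn]; ring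
      _ ≤ ((k ! * d.choose k : ℕ) : ℝ) := by exact_mod_cast hnat
      _ = (d.choose k : ℝ) * (k ! : ℝ) := by push_cast; ring
  -- G2 : (n-2d)^m / m! ≤ choose (n-d) m
  have G2 : ((n:ℝ) - 2*d)^m / (m ! : ℝ) ≤ ((n - d).choose m : ℝ) := by
    rw [div_le_iff₀ (by positivity)]
    have hnat : (n - 2*d)^m ≤ m ! * (n - d).choose m := by
      calc (n - 2*d)^m ≤ (n - d + 1 - m)^m := Nat.pow_le_pow_left (by omega) m
        _ ≤ (n - d).descFactorial m := Nat.pow_sub_le_descFactorial _ m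
        _ = m ! * (n - d).choose m := Nat.descFactorial_eq_factorial_mul_choose _ m
    calc ((n:ℝ) - 2*d)^m = (((n - 2*d : ℕ) : ℝ))^m := by push_cast [h2d]; ring
      _ ≤ ((m ! * (n - d).choose m : ℕ) : ℝ) := by exact_mod_cast hnat
      _ = ((n - d).choose m : ℝ) * (m ! : ℝ) := by push_cast; ring
  -- G3 : choose n d ≤ n^d / d!
  have G3 : (n.choose d : ℝ) ≤ (n:ℝ)^d / (d ! : ℝ) := by
    rw [le_div_iff₀ (by positivity)]
    have hnat : d ! * n.choose d ≤ n^d := by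
      rw [← Nat.descFactorial_eq_factorial_mul_choose]
      exact Nat.descFactorial_le_pow n d
    calc (n.choose d : ℝ) * (d ! : ℝ) = ((d ! * n.choose d : ℕ) : ℝ) := by push_cast; ring
      _ ≤ ((n^d : ℕ) : ℝ) := by exact_mod_cast hnat
      _ = (n:ℝ)^d := by push_cast; ring
  -- G4 : (d-k)^k * m! ≤ d!
  have G4 : ((d:ℝ) - k)^k * (m ! : ℝ) ≤ (d ! : ℝ) := by
    have hnat : (d - k)^k * m ! ≤ d ! := by
      rw [← Nat.factorial_mul_descFactorial hkdn]
      rw [mul_comm]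
      refine Nat.mul_le_mul_left _ ?_
      calc (d - k)^k ≤ (d + 1 - k)^k := Nat.pow_le_pow_left (by omega) k
        _ ≤ d.descFactorial k := Nat.pow_sub_le_descFactorial d k
    calc ((d:ℝ) - k)^k * (m ! : ℝ) = (((d - k : ℕ)^k * m ! : ℕ) : ℝ) := by
          push_cast [hkdn]; ring
      _ ≤ ((d ! : ℕ) : ℝ) := by exact_mod_cast hnat
  -- Step 1 : lower bound on the choose ratio
  have hC0 : (0:ℝ) < (n.choose d : ℝ) := by
    exact_mod_cast Nat.choose_pos hdn'
  have step1 : (((d:ℝ) - k)^k / (k ! : ℝ)) * (((n:ℝ) - 2*d)^m / (m ! : ℝ)) / ((n:ℝ)^d / (d ! : ℝ))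
      ≤ ((d.choose k : ℝ) * ((n - d).choose (d - k) : ℝ)) / (n.choose d : ℝ) := by
    rw [← hm]
    refine div_le_div₀ (by positivity) ?_ hC0 G3
    have h1 : (0:ℝ) ≤ ((d:ℝ) - k)^k / (k ! : ℝ) := by positivity
    have h2 : (0:ℝ) ≤ ((n:ℝ) - 2*d)^m / (m ! : ℝ) := by positivity
    exact mul_le_mul G1 G2 h2 (Nat.cast_nonneg _)
  -- Step 2 : simplify the left side of step1 via G4
  have step2 : ((d:ℝ) - k)^(2*k) * ((n:ℝ) - 2*d)^m / ((k ! : ℝ) * (n:ℝ)^d)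
      ≤ (((d:ℝ) - k)^k / (k ! : ℝ)) * (((n:ℝ) - 2*d)^m / (m ! : ℝ)) / ((n:ℝ)^d / (d ! : ℝ)) := by
    have hk0 : (0:ℝ) < (k ! : ℝ) := by exact_mod_cast Nat.factorial_pos k
    have hm0 : (0:ℝ) < (m ! : ℝ) := by exact_mod_cast Nat.factorial_pos m
    have hd0 : (0:ℝ) < (d ! : ℝ) := by exact_mod_cast Nat.factorial_pos d
    have hrw : (((d:ℝ) - k)^k / (k ! : ℝ)) * (((n:ℝ) - 2*d)^m / (m ! : ℝ)) / ((n:ℝ)^d / (d ! : ℝ))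
        = ((d:ℝ) - k)^k * ((n:ℝ) - 2*d)^m * (d ! : ℝ) / ((k ! : ℝ) * (m ! : ℝ) * (n:ℝ)^d) := by
      field_simp
    rw [hrw, div_le_div_iff₀ (by positivity) (by positivity)]
    have hc : (0:ℝ) ≤ ((d:ℝ)-k)^k * ((n:ℝ)-2*d)^m * (k ! : ℝ) * (n:ℝ)^d := by positivity
    have hkey := mul_le_mul_of_nonneg_left G4 hc
    rw [two_mul, pow_add]
    nlinarith [hkey]
  -- Step 3 : lower bound the explicit expression
  have hkle2t : (k:ℝ) ≤ 2*t := by linarith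
  have hfact : (k ! : ℝ) ≤ (2*t)^k := by
    calc (k ! : ℝ) ≤ (k:ℝ)^k := by exact_mod_cast Nat.factorial_le_pow k
      _ ≤ (2*t)^k := pow_le_pow_left₀ (Nat.cast_nonneg k) hkle2t k
  have hX2 : (d:ℝ)/2 ≤ (d:ℝ) - k := by
    have : (2*k:ℝ) ≤ d := by exact_mod_cast hkd
    linarith
  -- piece 1 : (d-k)^(2k) / (k! n^k) ≥ (1/8)^k
  have piece1 : ((1:ℝ)/8)^k ≤ ((d:ℝ) - k)^(2*k) / ((k ! : ℝ) * (n:ℝ)^k) := by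
    have hb : ((d:ℝ)/2)^(2*k) ≤ ((d:ℝ) - k)^(2*k) :=
      pow_le_pow_left₀ (by positivity) hX2 _
    have h1 : (t/4)^k / (2*t)^k ≤ ((d:ℝ) - k)^(2*k) / ((k ! : ℝ) * (n:ℝ)^k) := by
      have heq : (t/4)^k = ((d:ℝ)/2)^(2*k) / (n:ℝ)^k := by
        rw [pow_mul, ← div_pow]
        congr 1
        field_simp [ht]
        rw [ht]; field_simp; norm_num
      rw [heq]
      rw [div_div]
      refine div_le_div₀ (by positivity) hb (by positivity) ?_
      calc (n:ℝ)^k * (2*t)^k = (2*t)^k * (n:ℝ)^k := by ring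
        _ ≥ (k ! : ℝ) * (n:ℝ)^k := by
            exact mul_le_mul_of_nonneg_right hfact (by positivity)
    have h2 : (t/4)^k / (2*t)^k = ((1:ℝ)/8)^k := by
      rw [← div_pow]
      congr 1
      field_simp
      ring
    linarith [h1, h2 ▸ h1]
  -- piece 2 : ((n-2d)/n)^m ≥ exp(-4t)
  have hx14 : 2*(d:ℝ)/n ≤ 1/2 := by
    rw [div_le_iff₀ hnR]
    have : (8*d:ℝ) ≤ n := by exact_mod_cast hdn
    linarith
  have hexp : Real.exp (-(2*(2*(d:ℝ)/n))) ≤ 1 - 2*(d:ℝ)/n :=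
    exp_neg_two_le _ (by positivity) hx14
  have piece2 : Real.exp (-(4*t)) ≤ (((n:ℝ) - 2*d)/n)^m := by
    have heq : ((n:ℝ) - 2*d)/n = 1 - 2*(d:ℝ)/n := by field_simp
    rw [heq]
    calc Real.exp (-(4*t)) ≤ Real.exp ((m:ℝ) * (-(2*(2*(d:ℝ)/n)))) := by
          refine Real.exp_le_exp.mpr ?_
          have hmdR : (m:ℝ) ≤ d := by rw [hmR]; linarith [Nat.cast_nonneg (α := ℝ) k]
          have key : (m:ℝ) * (4*(d:ℝ)) ≤ 4*(d:ℝ)^2 := by nlinarith [hmdR, hdR]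
          have h4 : (m:ℝ) * (4*(d:ℝ)/n) ≤ 4*t := by
            have := (div_le_div_iff_of_pos_right hnR).mpr key
            calc (m:ℝ) * (4*(d:ℝ)/n) = (m:ℝ) * (4*(d:ℝ)) / n := by ring
              _ ≤ 4*(d:ℝ)^2 / n := this
              _ = 4*t := by rw [ht]; ring
          have : (m:ℝ) * -(2*(2*(d:ℝ)/n)) = -((m:ℝ) * (4*(d:ℝ)/n)) := by ring
          rw [this]
          linarith [h4]
      _ = Real.exp (-(2*(2*(d:ℝ)/n)))^m := Real.exp_nat_mul _ m
      _ ≤ (1 - 2*(d:ℝ)/n)^m := by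
          refine pow_le_pow_left₀ (Real.exp_nonneg _) hexp m
  -- combine pieces
  have step3 : ((1:ℝ)/8)^k * Real.exp (-(4*t))
      ≤ ((d:ℝ) - k)^(2*k) * ((n:ℝ) - 2*d)^m / ((k ! : ℝ) * (n:ℝ)^d) := by
    have hsplit : ((d:ℝ) - k)^(2*k) * ((n:ℝ) - 2*d)^m / ((k ! : ℝ) * (n:ℝ)^d)
        = (((d:ℝ) - k)^(2*k) / ((k ! : ℝ) * (n:ℝ)^k)) * ((((n:ℝ) - 2*d)/n)^m) := by
      rw [← hmd, pow_add, div_pow, div_mul_div_comm]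
      congr 1
      ring
    rw [hsplit]
    exact mul_le_mul piece1 piece2 (Real.exp_nonneg _) (by positivity)
  -- final : rewrite the target
  have htarget : 8⁻¹ * (8 * Real.exp 4) ^ (-t) ≤ ((1:ℝ)/8)^k * Real.exp (-(4*t)) := by
    have h8 : (0:ℝ) ≤ 8 := by norm_num
    rw [Real.mul_rpow h8 (Real.exp_pos 4).le]
    have hexp4 : Real.exp 4 ^ (-t) = Real.exp (-(4*t)) := by
      rw [← Real.exp_mul]; ring_nf
    rw [hexp4]
    have h18 : ((1:ℝ)/8)^k = (8:ℝ) ^ (-(k:ℝ)) := by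
      rw [Real.rpow_neg h8, Real.rpow_natCast]
      rw [one_div, inv_pow]
    rw [h18]
    have hmono : (8:ℝ) ^ (-(t+1)) ≤ (8:ℝ) ^ (-(k:ℝ)) := by
      refine Real.rpow_le_rpow_of_exponent_le (by norm_num) ?_
      linarith
    have hsplit8 : (8:ℝ) ^ (-(t+1)) = 8⁻¹ * (8:ℝ)^(-t) := by
      rw [show -(t+1) = -t + -1 by ring, Real.rpow_add (by norm_num)]
      rw [Real.rpow_neg_one]
      ring
    calc 8⁻¹ * ((8:ℝ)^(-t) * Real.exp (-(4*t)))
        = (8:ℝ)^(-(t+1)) * Real.exp (-(4*t)) := by rw [hsplit8]; ring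
      _ ≤ (8:ℝ)^(-(k:ℝ)) * Real.exp (-(4*t)) :=
          mul_le_mul_of_nonneg_right hmono (Real.exp_nonneg _)
  calc 8⁻¹ * (8 * Real.exp 4) ^ (-t)
      ≤ ((1:ℝ)/8)^k * Real.exp (-(4*t)) := htarget
    _ ≤ ((d:ℝ) - k)^(2*k) * ((n:ℝ) - 2*d)^m / ((k ! : ℝ) * (n:ℝ)^d) := step3
    _ ≤ _ := le_trans step2 step1
end

section
/- Let x be a real random variable with E[x²] = 1 and E[x^{2q}] ≤ (C q)^q for all q ∈ ℕ, for some constant C ≥ 1. Let x_1, ..., x_n be i.i.d. copies of x, let m ∈ ℕ and d_1, ..., d_m ∈ {1, ..., n} with s = Σ_j d_j ≤ n^{1/2}/(3Ce). For each j, average over all choices of a d_j-subset P_j of {1,...,n}: then (Π_j C(n,d_j))^{-1} Σ_{P_1,...,P_m} E[Π_{j=1}^m Π_{i ∈ P_j} x_i²] ≤ 1 + e^{2C²e²s²/n} · (2C²e²s²/n). -/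
open MeasureTheory ProbabilityTheory Finset

lemma aux_pow_le_exp_fact (a : ℕ) : (a:ℝ)^a ≤ Real.exp a * a.factorial := by
  have h := Real.sum_le_exp_of_nonneg (x := (a:ℝ)) (by positivity) (a+1)
  have h2 : (a:ℝ)^a / a.factorial ≤ Real.exp a := by
    refine le_trans ?_ h
    have : (a:ℝ)^a / a.factorial = ∑ i ∈ Finset.range (a+1), if i = a then (a:ℝ)^i / i.factorial else 0 := by
      rw [Finset.sum_ite_eq' (Finset.range (a+1)) a]
      simp
    rw [this]
    refine Finset.sum_le_sum fun i _ => ?_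
    split
    · exact le_refl _
    · positivity
  have hf : (0:ℝ) < a.factorial := by positivity
  calc (a:ℝ)^a = (a:ℝ)^a / a.factorial * a.factorial := by field_simp
    _ ≤ Real.exp a * a.factorial := by
        exact mul_le_mul_of_nonneg_right h2 (le_of_lt hf)

lemma aux_two_term (x y : ℝ) (hx : 0 ≤ x) (hy : 0 ≤ y) (q : ℕ) :
    y^(q+1) + (q+1)*x*y^q ≤ (x+y)^(q+1) := by
  induction q with
  | zero => simp; nlinarith
  | succ q ih =>
    have hyq : (0:ℝ) ≤ y^q := by positivity
    have hq : (0:ℝ) ≤ (q:ℝ) := by positivity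
    have h2 : (x+y) * (y^(q+1) + (q+1)*x*y^q) ≤ (x+y)^(q+2) := by
      have h1 : (x+y)^(q+2) = (x+y) * (x+y)^(q+1) := by ring
      rw [h1]
      exact mul_le_mul_of_nonneg_left ih (by linarith)
    refine le_trans ?_ h2
    have e1 : y^(q+1) = y * y^q := by ring
    have e2 : y^(q+1+1) = y * (y * y^q) := by ring
    push_cast
    rw [e2, e1]
    nlinarith [mul_nonneg hq (mul_nonneg (mul_nonneg hx hx) hyq), mul_nonneg (mul_nonneg hx hx) hyq]

lemma aux_esymm {ι : Type*} [DecidableEq ι] (c : ι → ℝ) (hc : ∀ j, 0 ≤ c j)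
    (s : Finset ι) : ∀ q : ℕ,
    (q.factorial : ℝ) * ∑ J ∈ s.powersetCard q, ∏ j ∈ J, c j ≤ (∑ j ∈ s, c j)^q := by
  induction s using Finset.induction_on with
  | empty =>
    intro q
    cases q with
    | zero => simp
    | succ q =>
      rw [Finset.powersetCard_eq_empty.2 (by simp)]
      simp
  | insert a s ha ih =>
    intro q
    cases q with
    | zero => simp
    | succ q =>
      have hS : (0:ℝ) ≤ ∑ j ∈ s, c j := Finset.sum_nonneg fun j _ => hc j
      rw [Finset.powersetCard_succ_insert ha]
      rw [Finset.sum_union, Finset.sum_image]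
      · have h1 : ∑ J ∈ s.powersetCard q, ∏ j ∈ insert a J, c j
            = c a * ∑ J ∈ s.powersetCard q, ∏ j ∈ J, c j := by
          rw [Finset.mul_sum]
          refine Finset.sum_congr rfl fun J hJ => ?_
          rw [Finset.prod_insert]
          exact fun haJ => ha ((Finset.mem_powersetCard.1 hJ).1 haJ)
        rw [h1, Finset.sum_insert ha]
        have h2 := aux_two_term (c a) (∑ j ∈ s, c j) (hc a) hS q
        have e3 : ((q+1).factorial : ℝ) = (q+1) * q.factorial := by
          push_cast [Nat.factorial_succ]; ring
        have i1 := ih (q+1)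
        have i2 := ih q
        have hfq : (0:ℝ) ≤ q.factorial := by positivity
        have hca := hc a
        calc ((q+1).factorial : ℝ) * (∑ J ∈ s.powersetCard (q+1), ∏ j ∈ J, c j
              + c a * ∑ J ∈ s.powersetCard q, ∏ j ∈ J, c j)
            = ((q+1).factorial : ℝ) * ∑ J ∈ s.powersetCard (q+1), ∏ j ∈ J, c j
              + (q+1) * c a * (q.factorial * ∑ J ∈ s.powersetCard q, ∏ j ∈ J, c j) := by
              rw [e3]; ring
          _ ≤ (∑ j ∈ s, c j)^(q+1) + (q+1) * c a * (∑ j ∈ s, c j)^q := by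
              refine add_le_add i1 ?_
              refine mul_le_mul_of_nonneg_left i2 ?_
              positivity
          _ ≤ (c a + ∑ j ∈ s, c j)^(q+1) := aux_two_term _ _ (hc a) hS q
      · intro J hJ K hK hIK
        have haJ : a ∉ J := fun h => ha ((Finset.mem_powersetCard.1 hJ).1 h)
        have haK : a ∉ K := fun h => ha ((Finset.mem_powersetCard.1 hK).1 h)
        have := congrArg (Finset.erase · a) hIK
        simpa [Finset.erase_insert haJ, Finset.erase_insert haK] using this
      · rw [Finset.disjoint_left]
        intro J hJ hJ2
        obtain ⟨K, hK, rfl⟩ := Finset.mem_image.1 hJ2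
        exact ha ((Finset.mem_powersetCard.1 hJ).1 (Finset.mem_insert_self a K))

lemma aux_choose_nat : ∀ (u d n : ℕ), u ≤ d → d ≤ n →
    (n-u).choose (d-u) * n^u ≤ n.choose d * d^u := by
  intro u
  induction u with
  | zero => intro d n _ _; simp
  | succ u ih =>
    intro d n hud hdn
    have hun : u < n := lt_of_lt_of_le (Nat.lt_of_succ_le hud) hdn
    have hud' : u < d := Nat.lt_of_succ_le hud
    -- identity : (n-u) * C(n-u-1, d-u-1) = C(n-u, d-u) * (d-u)
    have hnu : n - u = (n - (u+1)) + 1 := by omega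
    have hdu : d - u = (d - (u+1)) + 1 := by omega
    have key : (n - u) * (n - (u+1)).choose (d - (u+1)) =
        (n-u).choose (d-u) * (d-u) := by
      rw [hnu, hdu]
      exact Nat.add_one_mul_choose_eq _ _
    have hnu0 : 0 < n - u := by omega
    refine Nat.le_of_mul_le_mul_left ?_ hnu0
    calc (n-u) * ((n-(u+1)).choose (d-(u+1)) * n^(u+1))
        = ((n-u) * (n-(u+1)).choose (d-(u+1))) * n^(u+1) := by ring
      _ = ((n-u).choose (d-u) * (d-u)) * n^(u+1) := by rw [key]
      _ = ((d-u) * n) * ((n-u).choose (d-u) * n^u) := by ring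
      _ ≤ ((d-u) * n) * (n.choose d * d^u) := Nat.mul_le_mul_left _ (ih d n (le_of_lt hud') hdn)
      _ ≤ ((n-u) * d) * (n.choose d * d^u) := by
          refine Nat.mul_le_mul_right _ ?_
          calc (d-u)*n = d*n - u*n := by rw [Nat.sub_mul]
            _ ≤ d*n - u*d := by
                refine Nat.sub_le_sub_left ?_ _
                exact Nat.mul_le_mul_left u hdn
            _ = (n-u)*d := by
                rw [Nat.sub_mul, Nat.mul_comm d n, Nat.mul_comm u d]
      _ = (n-u) * (n.choose d * d^(u+1)) := by ring

lemma aux_count_s16 {α : Type*} [Fintype α] [DecidableEq α] (S : Finset α) (k : ℕ)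
    (h : S.card ≤ k) :
    ((Finset.univ.powersetCard k).filter (fun Q => S ⊆ Q)).card
      = (Fintype.card α - S.card).choose (k - S.card) := by
  have : ((Finset.univ.powersetCard k).filter (fun Q => S ⊆ Q)).card
      = (Sᶜ.powersetCard (k - S.card)).card := by
    refine Finset.card_bij' (fun Q _ => Q \ S) (fun R _ => R ∪ S) ?_ ?_ ?_ ?_
    · intro Q hQ
      rw [Finset.mem_filter, Finset.mem_powersetCard] at hQ
      rw [Finset.mem_powersetCard]
      constructor
      · intro x hx
        rw [Finset.mem_sdiff] at hx
        simpa using hx.2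
      · rw [Finset.card_sdiff_of_subset hQ.2, hQ.1.2]
    · intro R hR
      rw [Finset.mem_powersetCard] at hR
      rw [Finset.mem_filter, Finset.mem_powersetCard]
      have hdisj : Disjoint R S := by
        rw [Finset.disjoint_right]
        intro x hx hxR
        have := hR.1 hxR
        simp at this
        exact this hx
      refine ⟨⟨Finset.subset_univ _, ?_⟩, Finset.subset_union_right⟩
      rw [Finset.card_union_of_disjoint hdisj, hR.2]
      omega
    · intro Q hQ
      rw [Finset.mem_filter] at hQ
      exact Finset.sdiff_union_of_subset hQ.2
    · intro R hR
      rw [Finset.mem_powersetCard] at hR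
      have hdisj : Disjoint R S := by
        rw [Finset.disjoint_right]
        intro x hx hxR
        have := hR.1 hxR
        simp at this
        exact this hx
      show (R ∪ S) \ S = R
      rw [Finset.union_sdiff_distrib, Finset.sdiff_self, Finset.union_empty,
        Finset.sdiff_eq_self_of_disjoint hdisj]
  rw [this, Finset.card_powersetCard, Finset.card_compl]
lemma aux_ratio {α : Type*} [Fintype α] [DecidableEq α] (S : Finset α) (k : ℕ)
    (hcard : 0 < Fintype.card α) (hk : k ≤ Fintype.card α) :
    (((Finset.univ.powersetCard k).filter (fun Q => S ⊆ Q)).card : ℝ)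
      ≤ ((Fintype.card α).choose k : ℝ) * ((k:ℝ)/(Fintype.card α : ℝ))^S.card := by
  set N := Fintype.card α
  by_cases hSk : S.card ≤ k
  · rw [aux_count_s16 S k hSk]
    have h := aux_choose_nat S.card k N hSk hk
    have hN : (0:ℝ) < (N:ℝ) := by exact_mod_cast hcard
    have hNpow : (0:ℝ) < (N:ℝ)^S.card := by positivity
    rw [div_pow]
    calc ((N - S.card).choose (k - S.card) : ℝ)
        = ((N - S.card).choose (k - S.card) * N^S.card : ℕ) / (N:ℝ)^S.card := by
          push_cast; field_simp
      _ ≤ ((N.choose k * k^S.card : ℕ) : ℝ) / (N:ℝ)^S.card := by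
          have h' : (((N - S.card).choose (k - S.card) * N^S.card : ℕ) : ℝ)
              ≤ ((N.choose k * k^S.card : ℕ) : ℝ) := by exact_mod_cast h
          gcongr
      _ = (N.choose k : ℝ) * ((k:ℝ)^S.card / (N:ℝ)^S.card) := by push_cast; ring
  · have : ((Finset.univ.powersetCard k).filter (fun Q => S ⊆ Q)) = ∅ := by
      rw [Finset.filter_eq_empty_iff]
      intro Q hQ hSQ
      rw [Finset.mem_powersetCard] at hQ
      exact hSk (hQ.2 ▸ Finset.card_le_card hSQ)
    rw [this]
    simp only [Finset.card_empty, Nat.cast_zero]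
    positivity
lemma aux_integral_prod {Ω : Type*} [MeasureSpace Ω] [IsProbabilityMeasure (ℙ : Measure Ω)]
    {ι : Type*} [DecidableEq ι] (y : ι → Ω → ℝ)
    (hind : iIndepFun y ℙ)
    (hm : ∀ i, Measurable (y i)) (hi : ∀ i, Integrable (y i) ℙ) :
    ∀ s : Finset ι, Integrable (fun ω => ∏ i ∈ s, y i ω) ℙ ∧
      ∫ ω, ∏ i ∈ s, y i ω = ∏ i ∈ s, ∫ ω, y i ω := by
  intro s
  induction s using Finset.induction_on with
  | empty => simp
  | insert a s ha ih =>
    have hfun : (∏ i ∈ s, y i) = fun ω => ∏ i ∈ s, y i ω := by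
      funext ω; exact Finset.prod_apply ω s y
    have hip : IndepFun (∏ i ∈ s, y i) (y a) ℙ :=
      hind.indepFun_finsetProd_of_notMem hm ha
    have hint : Integrable ((∏ i ∈ s, y i) * y a) ℙ := by
      refine hip.integrable_mul ?_ (hi a)
      rw [hfun]; exact ih.1
    have heq : (fun ω => ∏ i ∈ insert a s, y i ω) = (∏ i ∈ s, y i) * y a := by
      funext ω
      simp only [Pi.mul_apply, hfun, Finset.prod_insert ha]
      ring
    constructor
    · rw [heq]; exact hint
    · have hI : Integrable (∏ i ∈ s, y i) ℙ := by rw [hfun]; exact ih.1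
      calc ∫ ω, ∏ i ∈ insert a s, y i ω = ∫ ω, ((∏ i ∈ s, y i) * y a) ω := by rw [heq]
        _ = (∫ ω, (∏ i ∈ s, y i) ω) * ∫ ω, y a ω := hip.integral_mul_eq_mul_integral hI.aestronglyMeasurable (hi a).aestronglyMeasurable
        _ = (∏ i ∈ s, ∫ ω, y i ω) * ∫ ω, y a ω := by rw [hfun, ih.2]
        _ = ∏ i ∈ insert a s, ∫ ω, y i ω := by rw [Finset.prod_insert ha]; ring
lemma aux_avg {n m : ℕ} (hn : 0 < n) (d : Fin m → ℕ) (hdn : ∀ j, d j ≤ n)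
    (v : Finset (Fin m) → ℝ) (hv : ∀ J, 0 ≤ v J)
    (TP : (Fin m → Finset (Fin n)) → Fin n → Finset (Fin m))
    (hTP : ∀ P i j, j ∈ TP P i → i ∈ P j) :
    (∏ j, (n.choose (d j) : ℝ))⁻¹ *
      ∑ P ∈ Finset.univ.filter (fun P : Fin m → Finset (Fin n) => ∀ j, (P j).card = d j),
        ∏ i, v (TP P i)
    ≤ (∑ J : Finset (Fin m), v J * ∏ j ∈ J, ((d j:ℝ)/n))^n := by
  classical
  set N : ℝ := ∏ j, (n.choose (d j) : ℝ) with hN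
  have hNpos : 0 < N := Finset.prod_pos fun j _ => by exact_mod_cast Nat.choose_pos (hdn j)
  set PP := Finset.univ.filter (fun P : Fin m → Finset (Fin n) => ∀ j, (P j).card = d j) with hPP
  set g : (Fin n → Finset (Fin m)) → ℝ := fun T => ∏ i, v (T i) with hg
  have hgnn : ∀ T, 0 ≤ g T := fun T => Finset.prod_nonneg fun i _ => hv _
  set cnt : (Fin n → Finset (Fin m)) → ℕ :=
    fun T => (PP.filter (fun P => ∀ i, ∀ j ∈ T i, i ∈ P j)).card with hcnt
  -- Step 1
  have step1 : ∑ P ∈ PP, g (TP P) ≤ ∑ T : Fin n → Finset (Fin m), (cnt T : ℝ) * g T := by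
    rw [Finset.sum_comp (fun T => g T) TP]
    calc ∑ T ∈ PP.image TP, #{P ∈ PP | TP P = T} • g T
        ≤ ∑ T ∈ PP.image TP, (cnt T : ℝ) * g T := by
          refine Finset.sum_le_sum fun T _ => ?_
          rw [nsmul_eq_mul]
          refine mul_le_mul_of_nonneg_right ?_ (hgnn T)
          have hsub : PP.filter (fun P => TP P = T)
              ⊆ PP.filter (fun P => ∀ i, ∀ j ∈ T i, i ∈ P j) := by
            intro P hP
            rw [Finset.mem_filter] at hP ⊢
            refine ⟨hP.1, fun i j hj => hTP P i j ?_⟩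
            rw [hP.2]
            exact hj
          exact_mod_cast Finset.card_le_card hsub
      _ ≤ ∑ T : Fin n → Finset (Fin m), (cnt T:ℝ) * g T :=
          Finset.sum_le_sum_of_subset_of_nonneg (Finset.subset_univ _)
            (fun T _ _ => mul_nonneg (Nat.cast_nonneg _) (hgnn T))
  -- Step 2 : product structure of cnt
  set SS : (Fin n → Finset (Fin m)) → Fin m → Finset (Fin n) :=
    fun T j => Finset.univ.filter (fun i => j ∈ T i) with hSS
  set cj : (Fin n → Finset (Fin m)) → Fin m → ℕ :=
    fun T j => ((Finset.univ.powersetCard (d j)).filter (fun Q => SS T j ⊆ Q)).card with hcj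
  have step2 : ∀ T, cnt T = ∏ j, cj T j := by
    intro T
    have hset : PP.filter (fun P => ∀ i, ∀ j ∈ T i, i ∈ P j)
        = Fintype.piFinset (fun j => (Finset.univ.powersetCard (d j)).filter
            (fun Q => SS T j ⊆ Q)) := by
      ext P
      simp only [hPP, Finset.filter_filter, Finset.mem_filter, Finset.mem_univ, true_and,
        Fintype.mem_piFinset, Finset.mem_powersetCard, Finset.subset_univ]
      have hmem : ∀ j (Q : Finset (Fin n)), (SS T j ⊆ Q ↔ ∀ i, j ∈ T i → i ∈ Q) := by
        intro j Q
        constructor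
        · intro hsub i hi
          refine hsub ?_
          rw [hSS]; simp only [Finset.mem_filter, Finset.mem_univ, true_and]; exact hi
        · intro h i hi
          rw [hSS] at hi
          simp only [Finset.mem_filter, Finset.mem_univ, true_and] at hi
          exact h i hi
      constructor
      · rintro ⟨h1, h2⟩ j
        exact ⟨h1 j, (hmem j (P j)).2 fun i hi => h2 i j hi⟩
      · intro h
        exact ⟨fun j => (h j).1, fun i j hj => (hmem j (P j)).1 (h j).2 i hj⟩
    rw [hcnt]
    simp only []
    rw [hset, Fintype.card_piFinset]
  -- Step 3-6
  set c : Fin m → ℝ := fun j => (d j : ℝ)/n with hc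
  have hcnn : ∀ j, 0 ≤ c j := fun j => by rw [hc]; positivity
  have step3 : ∀ T : Fin n → Finset (Fin m), N⁻¹ * ((cnt T : ℝ) * g T)
      ≤ ∏ i, (v (T i) * ∏ j ∈ T i, c j) := by
    intro T
    have e1 : (cnt T : ℝ) = ∏ j, (cj T j : ℝ) := by rw [step2 T]; push_cast; rfl
    have e2 : N⁻¹ * ((cnt T:ℝ) * g T) = (∏ j, (cj T j : ℝ)/(n.choose (d j):ℝ)) * g T := by
      rw [e1, Finset.prod_div_distrib, hN, div_eq_mul_inv]
      ring
    rw [e2]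
    have hle : ∏ j, ((cj T j:ℝ)/(n.choose (d j):ℝ)) ≤ ∏ j, c j ^ (SS T j).card := by
      refine Finset.prod_le_prod (fun j _ => by positivity) (fun j _ => ?_)
      rw [div_le_iff₀ (by exact_mod_cast Nat.choose_pos (hdn j))]
      have hr := aux_ratio (SS T j) (d j) (by simpa using hn) (by simpa using hdn j)
      simp only [Fintype.card_fin] at hr
      calc (cj T j : ℝ) ≤ (n.choose (d j):ℝ) * ((d j:ℝ)/n)^(SS T j).card := hr
        _ = c j ^ (SS T j).card * (n.choose (d j):ℝ) := by rw [hc]; ring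
    have e3 : ∏ j, c j ^ (SS T j).card = ∏ i, ∏ j ∈ T i, c j := by
      have h1 : ∀ j, c j ^ (SS T j).card = ∏ _i ∈ SS T j, c j := by
        intro j; rw [Finset.prod_const]
      rw [Finset.prod_congr rfl fun j _ => h1 j]
      refine Finset.prod_comm' ?_
      intro j i
      rw [hSS]
      simp
    calc (∏ j, (cj T j:ℝ)/(n.choose (d j):ℝ)) * g T ≤ (∏ j, c j ^ (SS T j).card) * g T :=
        mul_le_mul_of_nonneg_right hle (hgnn T)
      _ = (∏ i, ∏ j ∈ T i, c j) * ∏ i, v (T i) := by rw [e3, hg]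
      _ = ∏ i, (v (T i) * ∏ j ∈ T i, c j) := by
          rw [← Finset.prod_mul_distrib]
          exact Finset.prod_congr rfl fun i _ => by ring
  calc N⁻¹ * ∑ P ∈ PP, ∏ i, v (TP P i)
      ≤ N⁻¹ * ∑ T : Fin n → Finset (Fin m), (cnt T:ℝ) * g T :=
        mul_le_mul_of_nonneg_left step1 (inv_nonneg.2 hNpos.le)
    _ = ∑ T : Fin n → Finset (Fin m), N⁻¹ * ((cnt T:ℝ) * g T) := by rw [Finset.mul_sum]
    _ ≤ ∑ T : Fin n → Finset (Fin m), ∏ i, (v (T i) * ∏ j ∈ T i, c j) :=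
        Finset.sum_le_sum fun T _ => step3 T
    _ = ∏ _i : Fin n, ∑ J : Finset (Fin m), (v J * ∏ j ∈ J, c j) := by
        rw [← Fintype.piFinset_univ]
        exact (Finset.prod_univ_sum (fun _ => (univ : Finset (Finset (Fin m))))
          (fun _i J => v J * ∏ j ∈ J, c j)).symm
    _ = (∑ J : Finset (Fin m), v J * ∏ j ∈ J, ((d j:ℝ)/n))^n := by
        rw [Finset.prod_const, Finset.card_univ, Fintype.card_fin]
noncomputable def auxW (CE : ℝ) (a : ℕ) : ℝ := if a ≤ 1 then 1 else CE^a * a.factorial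
noncomputable def auxv (CE : ℝ) {m : ℕ} (J : Finset (Fin m)) : ℝ :=
  if J.card = 1 then 0 else auxW CE J.card

lemma auxW_nonneg (CE : ℝ) (hCE : 0 ≤ CE) (a : ℕ) : 0 ≤ auxW CE a := by
  rw [auxW]; split
  · norm_num
  · positivity

lemma auxv_nonneg (CE : ℝ) (hCE : 0 ≤ CE) {m : ℕ} (J : Finset (Fin m)) : 0 ≤ auxv CE J := by
  rw [auxv]; split
  · norm_num
  · exact auxW_nonneg CE hCE _

lemma aux_G {m : ℕ} (CE : ℝ) (hCE : 0 ≤ CE) (c : Fin m → ℝ) (hc : ∀ j, 0 ≤ c j)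
    (hr3 : CE * ∑ j, c j ≤ 1/3) :
    ∑ J : Finset (Fin m), auxv CE J * ∏ j ∈ J, c j
      ≤ 1 + (3/2) * (CE * ∑ j, c j)^2 := by
  classical
  set r : ℝ := CE * ∑ j, c j with hr
  have hr0 : 0 ≤ r := mul_nonneg hCE (Finset.sum_nonneg fun j _ => hc j)
  set f : ℕ → ℝ := fun q => ∑ J ∈ (Finset.univ : Finset (Fin m)).powersetCard q,
    auxv CE J * ∏ j ∈ J, c j with hf
  have hgrp : ∑ J : Finset (Fin m), auxv CE J * ∏ j ∈ J, c j
      = ∑ q ∈ Finset.range (m+1), f q := by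
    rw [← Finset.powerset_univ, Finset.sum_powerset]
    simp [Finset.card_univ]
    rfl
  have hf0 : f 0 = 1 := by
    rw [hf]
    simp [Finset.powersetCard_zero, auxv, auxW]
  have hfq : ∀ q : ℕ, f (q+1) ≤ if q = 0 then 0 else r^(q+1) := by
    intro q
    cases q with
    | zero =>
      simp only [if_pos rfl]
      rw [hf]
      refine le_of_eq (Finset.sum_eq_zero fun J hJ => ?_)
      rw [Finset.mem_powersetCard] at hJ
      rw [auxv, if_pos hJ.2]
      ring
    | succ q =>
      simp only [Nat.succ_ne_zero, if_neg]
      have hcard : ∀ J ∈ (Finset.univ : Finset (Fin m)).powersetCard (q+2),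
          auxv CE J = CE^(q+2) * (q+2).factorial := by
        intro J hJ
        rw [Finset.mem_powersetCard] at hJ
        rw [auxv, hJ.2, if_neg (by omega), auxW, if_neg (by omega)]
      calc f (q+2) = ∑ J ∈ (Finset.univ : Finset (Fin m)).powersetCard (q+2),
            (CE^(q+2) * (q+2).factorial) * ∏ j ∈ J, c j := by
            rw [hf]
            exact Finset.sum_congr rfl fun J hJ => by rw [hcard J hJ]
        _ = CE^(q+2) * (((q+2).factorial : ℝ) * ∑ J ∈ (Finset.univ : Finset (Fin m)).powersetCard (q+2), ∏ j ∈ J, c j) := by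
            rw [Finset.mul_sum, Finset.mul_sum]
            exact Finset.sum_congr rfl fun J _ => by ring
        _ ≤ CE^(q+2) * (∑ j, c j)^(q+2) := by
            refine mul_le_mul_of_nonneg_left (aux_esymm c hc _ _) (by positivity)
        _ = r^(q+2) := by rw [hr, mul_pow]
  have htail : ∑ q ∈ Finset.range m, (if q = 0 then (0:ℝ) else r^(q+1)) ≤ (3/2) * r^2 := by
    cases m with
    | zero => simp; positivity
    | succ m' =>
      rw [Finset.sum_range_succ' _ m']
      simp only [if_true, if_false, Nat.succ_ne_zero, if_neg, if_pos, reduceIte, add_zero]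
      have hterm : ∀ k : ℕ, r^(k+2) ≤ r^2 * (1/3)^k := by
        intro k
        have : r^(k+2) = r^2 * r^k := by ring
        rw [this]
        refine mul_le_mul_of_nonneg_left ?_ (by positivity)
        exact pow_le_pow_left₀ hr0 hr3 k
      calc ∑ k ∈ Finset.range m', r^(k+1+1) ≤ ∑ k ∈ Finset.range m', r^2 * (1/3:ℝ)^k :=
          Finset.sum_le_sum fun k _ => hterm k
        _ = r^2 * ∑ k ∈ Finset.range m', (1/3:ℝ)^k := by rw [Finset.mul_sum]
        _ ≤ r^2 * (3/2) := by
            refine mul_le_mul_of_nonneg_left ?_ (by positivity)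
            rw [geom_sum_eq (by norm_num : (1/3:ℝ) ≠ 1)]
            rw [div_le_iff_of_neg (by norm_num : (1/3:ℝ) - 1 < 0)]
            have : (0:ℝ) ≤ (1/3:ℝ)^m' := by positivity
            linarith
        _ = (3/2) * r^2 := by ring
  calc ∑ J : Finset (Fin m), auxv CE J * ∏ j ∈ J, c j
      = ∑ q ∈ Finset.range (m+1), f q := hgrp
    _ = (∑ q ∈ Finset.range m, f (q+1)) + f 0 := Finset.sum_range_succ' f m
    _ ≤ (∑ q ∈ Finset.range m, (if q = 0 then (0:ℝ) else r^(q+1))) + 1 := by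
        rw [hf0]
        exact add_le_add (Finset.sum_le_sum fun q _ => hfq q) (le_refl 1)
    _ ≤ (3/2) * r^2 + 1 := add_le_add htail (le_refl 1)
    _ = 1 + (3/2) * r^2 := by ring
set_option maxHeartbeats 1000000

theorem stmt_16 {Ω : Type*} [MeasureSpace Ω] [IsProbabilityMeasure (ℙ : Measure Ω)]
    (n m : ℕ) (C : ℝ) (hC : 1 ≤ C)
    (x : Fin n → Ω → ℝ) (hmeas : ∀ i, Measurable (x i))
    (hindep : iIndepFun x ℙ)
    (hident : ∀ i j, IdentDistrib (x i) (x j) ℙ ℙ)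
    (hint : ∀ i, ∀ q : ℕ, Integrable (fun ω => (x i ω) ^ (2 * q)) ℙ)
    (hm2 : ∀ i, ∫ ω, (x i ω) ^ 2 = 1)
    (hmom : ∀ i, ∀ q : ℕ, ∫ ω, (x i ω) ^ (2 * q) ≤ (C * q) ^ q)
    (d : Fin m → ℕ) (hd : ∀ j, 1 ≤ d j ∧ d j ≤ n)
    (hs : ((∑ j, d j : ℕ) : ℝ) ≤ Real.sqrt n / (3 * C * Real.exp 1)) :
    (∏ j, (n.choose (d j) : ℝ))⁻¹ *
        ∑ P ∈ Finset.univ.filter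
          (fun P : Fin m → Finset (Fin n) => ∀ j, (P j).card = d j),
          ∫ ω, ∏ j, ∏ i ∈ P j, (x i ω) ^ 2 ≤
      1 + Real.exp (2 * C ^ 2 * Real.exp 1 ^ 2 * ((∑ j, d j : ℕ) : ℝ) ^ 2 / n) *
        (2 * C ^ 2 * Real.exp 1 ^ 2 * ((∑ j, d j : ℕ) : ℝ) ^ 2 / n) := by
  classical
  have hE : (0:ℝ) < Real.exp 1 := Real.exp_pos 1
  have hC0 : (0:ℝ) < C := lt_of_lt_of_le one_pos hC
  have hCE : (0:ℝ) ≤ C * Real.exp 1 := by positivity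
  -- case n = 0
  rcases Nat.eq_zero_or_pos n with hn | hn
  · subst hn
    rcases Nat.eq_zero_or_pos m with hm | hm
    · subst hm
      have h1 : (∑ j : Fin 0, d j) = 0 := rfl
      rw [h1]
      have h2 : (Finset.univ.filter
          (fun P : Fin 0 → Finset (Fin 0) => ∀ j, (P j).card = d j)) = Finset.univ := by
        apply Finset.filter_true_of_mem
        intro P _ j
        exact absurd j.2 (by omega)
      rw [h2]
      simp [integral_const]
    · obtain ⟨h1, h2⟩ := hd ⟨0, hm⟩
      omega
  -- main case
  have hn' : (0:ℝ) < n := by exact_mod_cast hn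
  set CE : ℝ := C * Real.exp 1 with hCEdef
  set sn : ℝ := ((∑ j, d j : ℕ) : ℝ) with hsn
  have hsn0 : 0 ≤ sn := by positivity
  -- pointwise moments
  have hMnn : ∀ (i : Fin n) (a : ℕ), 0 ≤ ∫ ω, x i ω ^ (2*a) := by
    intro i a
    refine integral_nonneg fun ω => ?_
    rw [pow_mul]
    positivity
  have hM0 : ∀ i : Fin n, ∫ ω, x i ω ^ (2*0) = 1 := by
    intro i
    simp [integral_const]
  have hMle : ∀ (i : Fin n) (a : ℕ), ∫ ω, x i ω ^ (2*a) ≤ auxW CE a := by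
    intro i a
    match a with
    | 0 => rw [hM0 i, auxW]; norm_num
    | 1 =>
      have : 2*1 = 2 := rfl
      rw [this, auxW, if_pos (le_refl 1)]
      rw [hm2 i]
    | (a+2) =>
      rw [auxW, if_neg (by omega)]
      refine le_trans (hmom i (a+2)) ?_
      have h1 : (C * ((a:ℝ)+2))^(a+2) = C^(a+2) * ((a:ℝ)+2)^(a+2) := by rw [mul_pow]
      have h2 := aux_pow_le_exp_fact (a+2)
      have h3 : Real.exp ((a:ℕ)+2 : ℕ) = Real.exp 1 ^ (a+2) := by
        rw [← Real.exp_nat_mul]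
        norm_num
      push_cast at h2 h3 ⊢
      rw [h1]
      calc C^(a+2) * ((a:ℝ)+2)^(a+2) ≤ C^(a+2) * (Real.exp 1 ^(a+2) * ((a+2).factorial : ℝ)) := by
            refine mul_le_mul_of_nonneg_left ?_ (by positivity)
            rw [← h3]
            push_cast
            exact h2
        _ = CE^(a+2) * ((a+2).factorial : ℝ) := by rw [hCEdef, mul_pow]; push_cast; ring
  -- the T map
  set TP : (Fin m → Finset (Fin n)) → Fin n → Finset (Fin m) :=
    fun P i => if 2 ≤ (Finset.univ.filter fun j => i ∈ P j).card
      then Finset.univ.filter (fun j => i ∈ P j) else ∅ with hTPdef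
  have hTP : ∀ P i j, j ∈ TP P i → i ∈ P j := by
    intro P i j hj
    rw [hTPdef] at hj
    simp only [] at hj
    split at hj
    · rw [Finset.mem_filter] at hj
      exact hj.2
    · exact absurd hj (Finset.notMem_empty j)
  -- per-term identity and bound
  have hterm : ∀ P : Fin m → Finset (Fin n),
      (∫ ω, ∏ j, ∏ i ∈ P j, (x i ω) ^ 2) ≤ ∏ i, auxv CE (TP P i) := by
    intro P
    set AP : Fin n → ℕ := fun i => (Finset.univ.filter fun j => i ∈ P j).card with hAP
    have hpt : ∀ ω, ∏ j, ∏ i ∈ P j, (x i ω)^2 = ∏ i, x i ω ^ (2 * AP i) := by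
      intro ω
      rw [Finset.prod_comm' (t' := Finset.univ)
        (s' := fun i => Finset.univ.filter fun j => i ∈ P j) (by intro j i; simp)]
      refine Finset.prod_congr rfl fun i _ => ?_
      rw [Finset.prod_const, ← pow_mul]
    have heq : ∫ ω, ∏ j, ∏ i ∈ P j, (x i ω)^2 = ∏ i, ∫ ω, x i ω ^ (2 * AP i) := by
      have hy := aux_integral_prod (fun i ω => x i ω ^ (2 * AP i))
        (hindep.comp (fun i t => t ^ (2 * AP i)) (fun i => measurable_id.pow_const _))
        (fun i => (hmeas i).pow_const _) (fun i => hint i (AP i)) Finset.univ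
      rw [← hy.2]
      exact integral_congr_ae (Filter.Eventually.of_forall fun ω => hpt ω)
    rw [heq]
    refine Finset.prod_le_prod (fun i _ => hMnn i (AP i)) (fun i _ => ?_)
    by_cases h2 : 2 ≤ AP i
    · have hTPi : TP P i = Finset.univ.filter fun j => i ∈ P j := by
        rw [hTPdef]; simp only []; rw [if_pos h2]
      rw [hTPi, auxv]
      have hcard : (Finset.univ.filter fun j => i ∈ P j).card = AP i := rfl
      rw [hcard, if_neg (by omega)]
      exact hMle i (AP i)
    · have hTPi : TP P i = ∅ := by
        rw [hTPdef]; simp only []; rw [if_neg h2]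
      rw [hTPi, auxv]
      simp only [Finset.card_empty]
      simp only [auxW, show ¬ ((0:ℕ) = 1) by omega, show (0:ℕ) ≤ 1 by omega, ↓reduceIte]
      have h01 : AP i = 0 ∨ AP i = 1 := by omega
      rcases h01 with h | h
      · rw [h, hM0 i]
      · rw [h, show 2*1 = 2 from rfl, hm2 i]
  -- assemble
  set N : ℝ := ∏ j, (n.choose (d j) : ℝ) with hNdef
  have hNpos : 0 < N := Finset.prod_pos fun j _ => by
    exact_mod_cast Nat.choose_pos (hd j).2
  have hsum : ∑ P ∈ Finset.univ.filter
        (fun P : Fin m → Finset (Fin n) => ∀ j, (P j).card = d j),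
        ∫ ω, ∏ j, ∏ i ∈ P j, (x i ω)^2
      ≤ ∑ P ∈ Finset.univ.filter
        (fun P : Fin m → Finset (Fin n) => ∀ j, (P j).card = d j),
        ∏ i, auxv CE (TP P i) := Finset.sum_le_sum fun P _ => hterm P
  have havg := aux_avg hn d (fun j => (hd j).2) (auxv CE) (auxv_nonneg CE hCE) TP hTP
  have step0 := mul_le_mul_of_nonneg_left hsum (inv_nonneg.2 hNpos.le)
  refine le_trans (le_trans step0 havg) ?_
  -- numeric tail
  have hCE0 : (0:ℝ) < CE := by rw [hCEdef]; positivity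
  have hsqrt1 : (1:ℝ) ≤ Real.sqrt n := by
    rw [show (1:ℝ) = Real.sqrt 1 from (Real.sqrt_one).symm]
    exact Real.sqrt_le_sqrt (by exact_mod_cast hn)
  have hsqrtn : Real.sqrt n ≤ n := by
    nlinarith [Real.sq_sqrt (le_of_lt hn'), Real.sqrt_nonneg (n:ℝ)]
  have hCEsn : CE * sn ≤ Real.sqrt n / 3 := by
    have h1 : CE * sn ≤ CE * (Real.sqrt n / (3 * CE)) := by
      refine mul_le_mul_of_nonneg_left ?_ hCE
      rw [hCEdef]
      calc sn ≤ Real.sqrt n / (3 * C * Real.exp 1) := hs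
        _ = Real.sqrt n / (3 * (C * Real.exp 1)) := by ring_nf
    calc CE * sn ≤ CE * (Real.sqrt n / (3 * CE)) := h1
      _ = Real.sqrt n / 3 := by field_simp
  have hsumc : ∑ j, ((d j:ℝ)/n) = sn/n := by
    rw [hsn]
    push_cast
    rw [Finset.sum_div]
  have hr3 : CE * ∑ j, ((d j:ℝ)/n) ≤ 1/3 := by
    rw [hsumc, mul_div_assoc']
    calc CE * sn / n ≤ (Real.sqrt n / 3) / n := by gcongr
      _ ≤ 1/3 := by
          rw [div_div, div_le_div_iff₀ (by positivity) (by norm_num)]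
          linarith
  have hG := aux_G CE hCE (fun j => (d j:ℝ)/n) (fun j => by positivity) hr3
  set G : ℝ := ∑ J : Finset (Fin m), auxv CE J * ∏ j ∈ J, ((d j:ℝ)/n) with hGdef
  have hG0 : 0 ≤ G := Finset.sum_nonneg fun J _ =>
    mul_nonneg (auxv_nonneg CE hCE J) (Finset.prod_nonneg fun j _ => by positivity)
  set ψ : ℝ := (3/2) * (CE * ∑ j, ((d j:ℝ)/n))^2 with hψdef
  set β : ℝ := 2 * C ^ 2 * Real.exp 1 ^ 2 * sn ^ 2 / n with hβdef
  have hβ0 : 0 ≤ β := by rw [hβdef]; positivity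
  have hnψβ : (n:ℝ) * ψ ≤ β := by
    rw [hψdef, hβdef, hsumc, hCEdef]
    have hX0 : 0 ≤ C^2 * Real.exp 1^2 * sn^2 / n := by positivity
    have e1 : (n:ℝ) * ((3/2) * ((C*Real.exp 1) * (sn/n))^2)
        = (3/2) * (C^2 * Real.exp 1^2 * sn^2 / n) := by
      have hpow : ((C*Real.exp 1) * (sn/n))^2 = C^2 * Real.exp 1^2 * sn^2 / n^2 := by
        rw [mul_pow, mul_pow, div_pow]
        ring
      rw [hpow]
      obtain ⟨E0, hE0⟩ : ∃ E0 : ℝ, Real.exp 1 = E0 := ⟨_, rfl⟩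
      rw [hE0]
      have hne : (n:ℝ) ≠ 0 := ne_of_gt hn'
      field_simp
    have e2 : 2 * C ^ 2 * Real.exp 1 ^ 2 * sn ^ 2 / n
        = 2 * (C^2 * Real.exp 1^2 * sn^2 / n) := by ring
    rw [e1, e2]
    linarith
  have hfinal : Real.exp β ≤ 1 + Real.exp β * β := by
    have h1 : (1 - β) * Real.exp β ≤ 1 := by
      have h2 : 1 - β ≤ Real.exp (-β) := by linarith [Real.add_one_le_exp (-β)]
      calc (1-β) * Real.exp β ≤ Real.exp (-β) * Real.exp β :=
          mul_le_mul_of_nonneg_right h2 (Real.exp_pos β).le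
        _ = 1 := by rw [← Real.exp_add]; simp
    nlinarith [Real.exp_pos β]
  calc G^n ≤ (1 + ψ)^n := by
        refine pow_le_pow_left₀ hG0 ?_ n
        rw [hGdef, hψdef]
        exact hG
    _ ≤ Real.exp ψ ^ n := by
        refine pow_le_pow_left₀ (by positivity) ?_ n
        rw [add_comm]
        exact Real.add_one_le_exp ψ
    _ = Real.exp ((n:ℝ) * ψ) := (Real.exp_nat_mul ψ n).symm
    _ ≤ Real.exp β := Real.exp_le_exp.2 hnψβ
    _ ≤ 1 + Real.exp β * β := hfinal
end
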